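/- arXiv:1812.10911 — 6 statements merged into one kernel-verified Lean document; each statement's English description precedes it below -/
import Mathlib

section
/- Let g₁,...,g_F ∈ {−1,+1}^Q with F = Q − 1 be vectors such that (1_Q, g₁,...,g_F) form an orthogonal basis of ℝ^Q (each g_f is orthogonal to the all-ones vector and to every other g_k, with g_f'g_f = Q). Let B = (g₁,...,g_F)' ∈ ℝ^{F×Q} and N = diag(n₁,...,n_Q) with all n_q > 0, and set n = Σ_q n_q. Then N^{-1} B' (B N^{-1} B')^{-1} B N^{-1} = N^{-1} − n^{-1} J_Q, where J_Q is the Q×Q all-ones matrix. In particular, the (q,k) entry of N^{-1} B' (B N^{-1} B')^{-1} B N^{-1} equals n_q^{-1} 1{q=k} − n^{-1}. -/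
/-!
Adjoining the row `1ᵀ` to `B` gives a square matrix `A` with `A Aᵀ = Q • 1`, hence also
`Aᵀ A = Q • 1`, i.e. `BᵀB = Q • 1 - J`. For `N = diag(n_q)` and `K = N - n⁻¹ • N J N` one has
`J K = K J = 0`; this makes `Q⁻² • B K Bᵀ` the inverse of `B N⁻¹ Bᵀ`, and then
`N⁻¹ Bᵀ (B N⁻¹ Bᵀ)⁻¹ B N⁻¹ = Q⁻² • N⁻¹ (BᵀB) K (BᵀB) N⁻¹ = N⁻¹ K N⁻¹ = N⁻¹ - n⁻¹ • J`.
-/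

open Matrix BigOperators

section

variable {𝕜 : Type*} [Field 𝕜] {ι κ : Type*} [Fintype ι] [DecidableEq ι] [Fintype κ] [DecidableEq κ]

local notation "𝟙" => (of 1 : Matrix ι ι 𝕜)

theorem transpose_mul_self_eq_smul_one_sub_ones {B : Matrix κ ι 𝕜}
    (hcard : Fintype.card κ + 1 = Fintype.card ι) (hc : (Fintype.card ι : 𝕜) ≠ 0)
    (hBBt : B * Bᵀ = (Fintype.card ι : 𝕜) • 1) (hB : B *ᵥ 1 = 0) :
    Bᵀ * B = (Fintype.card ι : 𝕜) • 1 - 𝟙 := by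
  set c : 𝕜 := (Fintype.card ι : 𝕜)
  set u : Matrix Unit ι 𝕜 := of 1
  have hrow : ∀ i, ∑ j, B i j = 0 := fun i => by simpa [mulVec, dotProduct] using congrFun hB i
  have huu : uᵀ * u = 𝟙 := by ext; simp [u, mul_apply]
  have hAAt : (c⁻¹ • fromRows B u) * (fromRows B u)ᵀ = 1 := by
    rw [transpose_fromRows, smul_mul, fromRows_mul_fromCols, hBBt]
    ext (i | i) (j | j) <;> simp [u, c, hc, one_apply, mul_apply, hrow]
  have hAtA := (mul_eq_one_comm_of_equiv (Fintype.equivOfCardEq (by simp [hcard]))).mp hAAt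
  rw [transpose_fromRows, Matrix.mul_smul, fromCols_mul_fromRows, huu, inv_smul_eq_iff₀ hc] at hAtA
  rw [← hAtA, add_sub_cancel_right]

def centeredDiagonal (d : ι → 𝕜) : Matrix ι ι 𝕜 :=
  diagonal d - (∑ i, d i)⁻¹ • (diagonal d * 𝟙 * diagonal d)

theorem ones_mul_diagonal_mul_ones (d : ι → 𝕜) : 𝟙 * diagonal d * 𝟙 = (∑ i, d i) • 𝟙 := by
  ext
  simp [mul_apply, diagonal_apply]

section centeredDiagonal

variable {d : ι → 𝕜}

theorem ones_mul_centeredDiagonal (hsum : ∑ i, d i ≠ 0) : 𝟙 * centeredDiagonal d = 0 := by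
  rw [centeredDiagonal, Matrix.mul_sub, Matrix.mul_smul, ← Matrix.mul_assoc, ← Matrix.mul_assoc,
    ones_mul_diagonal_mul_ones, smul_mul, smul_smul, inv_mul_cancel₀ hsum, one_smul, sub_self]

theorem centeredDiagonal_mul_ones (hsum : ∑ i, d i ≠ 0) : centeredDiagonal d * 𝟙 = 0 := by
  simp only [centeredDiagonal, Matrix.sub_mul, smul_mul, Matrix.mul_assoc]
  rw [← Matrix.mul_assoc 𝟙, ones_mul_diagonal_mul_ones, Matrix.mul_smul, smul_smul,
    inv_mul_cancel₀ hsum, one_smul, sub_self]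

theorem diagonal_inv_mul_diagonal (hd : ∀ i, d i ≠ 0) : diagonal d⁻¹ * diagonal d = 1 := by
  rw [diagonal_mul_diagonal, ← diagonal_one]
  exact congrArg diagonal (funext fun i => inv_mul_cancel₀ (hd i))

theorem diagonal_mul_diagonal_inv (hd : ∀ i, d i ≠ 0) : diagonal d * diagonal d⁻¹ = 1 := by
  rw [diagonal_mul_diagonal, ← diagonal_one]
  exact congrArg diagonal (funext fun i => mul_inv_cancel₀ (hd i))

theorem diagonal_inv_mul_centeredDiagonal (hd : ∀ i, d i ≠ 0) :
    diagonal d⁻¹ * centeredDiagonal d = 1 - (∑ i, d i)⁻¹ • (𝟙 * diagonal d) := by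
  rw [centeredDiagonal, Matrix.mul_sub, Matrix.mul_smul, ← Matrix.mul_assoc, ← Matrix.mul_assoc,
    diagonal_inv_mul_diagonal hd, Matrix.one_mul]

theorem diagonal_inv_mul_centeredDiagonal_mul_diagonal_inv (hd : ∀ i, d i ≠ 0) :
    diagonal d⁻¹ * centeredDiagonal d * diagonal d⁻¹ = diagonal d⁻¹ - (∑ i, d i)⁻¹ • 𝟙 := by
  rw [diagonal_inv_mul_centeredDiagonal hd, Matrix.sub_mul, smul_mul, Matrix.mul_assoc,
    diagonal_mul_diagonal_inv hd, Matrix.one_mul, Matrix.mul_one]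

end centeredDiagonal

section projection

variable {B : Matrix κ ι 𝕜} {c : 𝕜} {d : ι → 𝕜}

theorem mul_ones_eq_zero (hBBt : B * Bᵀ = c • 1) (hBtB : Bᵀ * B = c • 1 - 𝟙) : B * 𝟙 = 0 := by
  have h := Matrix.mul_assoc B Bᵀ B
  rwa [hBBt, hBtB, smul_mul, Matrix.one_mul, Matrix.mul_sub, Matrix.mul_smul, Matrix.mul_one,
    eq_comm, sub_eq_self] at h

theorem inv_mul_diagonal_inv_mul_transpose (hc : c ≠ 0) (hd : ∀ i, d i ≠ 0)
    (hsum : ∑ i, d i ≠ 0) (hBBt : B * Bᵀ = c • 1) (hBtB : Bᵀ * B = c • 1 - 𝟙) :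
    (B * diagonal d⁻¹ * Bᵀ)⁻¹ = (c ^ 2)⁻¹ • (B * centeredDiagonal d * Bᵀ) := by
  refine inv_eq_right_inv ?_
  calc B * diagonal d⁻¹ * Bᵀ * ((c ^ 2)⁻¹ • (B * centeredDiagonal d * Bᵀ))
      = (c ^ 2)⁻¹ • (B * diagonal d⁻¹ * (Bᵀ * B) * centeredDiagonal d * Bᵀ) := by
        simp only [Matrix.mul_smul, Matrix.mul_assoc]
    _ = (c ^ 2)⁻¹ • (c • (B * (diagonal d⁻¹ * centeredDiagonal d) * Bᵀ)) := by
        simp only [hBtB, Matrix.mul_sub, Matrix.sub_mul, Matrix.mul_smul, Matrix.smul_mul,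
          Matrix.mul_one, Matrix.mul_assoc, ones_mul_centeredDiagonal hsum, Matrix.mul_zero,
          sub_zero]
    _ = (c ^ 2)⁻¹ • (c • (B * Bᵀ - (∑ i, d i)⁻¹ • (B * 𝟙 * diagonal d * Bᵀ))) := by
        simp only [diagonal_inv_mul_centeredDiagonal hd, Matrix.mul_sub, Matrix.sub_mul,
          Matrix.mul_smul, Matrix.smul_mul, Matrix.mul_one, Matrix.mul_assoc]
    _ = 1 := by
        rw [hBBt, mul_ones_eq_zero hBBt hBtB]
        simp [smul_smul, ← sq, hc]

theorem diagonal_inv_mul_transpose_mul_inv_mul_mul_diagonal_inv (hc : c ≠ 0)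
    (hd : ∀ i, d i ≠ 0) (hsum : ∑ i, d i ≠ 0) (hBBt : B * Bᵀ = c • 1)
    (hBtB : Bᵀ * B = c • 1 - 𝟙) :
    diagonal d⁻¹ * Bᵀ * (B * diagonal d⁻¹ * Bᵀ)⁻¹ * B * diagonal d⁻¹
      = diagonal d⁻¹ - (∑ i, d i)⁻¹ • 𝟙 := by
  have hsandwich : (Bᵀ * B) * centeredDiagonal d * (Bᵀ * B) = c ^ 2 • centeredDiagonal d := by
    simp only [hBtB, Matrix.sub_mul, Matrix.mul_sub, smul_mul, Matrix.mul_smul, Matrix.one_mul,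
      Matrix.mul_one, ones_mul_centeredDiagonal hsum, centeredDiagonal_mul_ones hsum, smul_zero,
      sub_zero, smul_smul, sq]
  calc diagonal d⁻¹ * Bᵀ * (B * diagonal d⁻¹ * Bᵀ)⁻¹ * B * diagonal d⁻¹
      = (c ^ 2)⁻¹ • (diagonal d⁻¹ * ((Bᵀ * B) * centeredDiagonal d * (Bᵀ * B)) * diagonal d⁻¹) := by
        rw [inv_mul_diagonal_inv_mul_transpose hc hd hsum hBBt hBtB]
        simp only [Matrix.mul_smul, Matrix.smul_mul, Matrix.mul_assoc]
    _ = diagonal d⁻¹ - (∑ i, d i)⁻¹ • 𝟙 := by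
        rw [hsandwich, Matrix.mul_smul, smul_mul, smul_smul, inv_mul_cancel₀ (pow_ne_zero 2 hc),
          one_smul, diagonal_inv_mul_centeredDiagonal_mul_diagonal_inv hd]

end projection

end

theorem stmt1_general (Q : ℕ) (hQ : 2 ≤ Q)
    (g : Fin (Q - 1) → Fin Q → ℝ)
    (hones : ∀ f, ∑ q, g f q = 0)
    (horth : ∀ f k, f ≠ k → ∑ q, g f q * g k q = 0)
    (hnorm : ∀ f, ∑ q, g f q * g f q = (Q : ℝ))
    (nv : Fin Q → ℝ) (hn : ∀ q, 0 < nv q) :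
    letI B : Matrix (Fin (Q - 1)) (Fin Q) ℝ := Matrix.of g
    letI Ninv : Matrix (Fin Q) (Fin Q) ℝ := Matrix.diagonal fun q => (nv q)⁻¹
    letI n : ℝ := ∑ q, nv q
    Ninv * Bᵀ * (B * Ninv * Bᵀ)⁻¹ * B * Ninv
        = Ninv - n⁻¹ • Matrix.of (fun _ _ => (1 : ℝ)) ∧
      ∀ q k, (Ninv * Bᵀ * (B * Ninv * Bᵀ)⁻¹ * B * Ninv) q k
        = (if q = k then (nv q)⁻¹ else 0) - n⁻¹ := by
  set B : Matrix (Fin (Q - 1)) (Fin Q) ℝ := of g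
  set Ninv : Matrix (Fin Q) (Fin Q) ℝ := diagonal fun q => (nv q)⁻¹
  set n : ℝ := ∑ q, nv q
  have hcard : Fintype.card (Fin (Q - 1)) + 1 = Fintype.card (Fin Q) := by simp; omega
  have hQ0 : (Fintype.card (Fin Q) : ℝ) ≠ 0 := by simp; omega
  have hBBt : B * Bᵀ = (Fintype.card (Fin Q) : ℝ) • 1 := by
    ext f k
    rcases eq_or_ne f k with rfl | hfk
    · simp [B, mul_apply, hnorm]
    · simp [B, mul_apply, horth f k hfk, hfk]
  have hB1 : B *ᵥ 1 = 0 := funext fun f => by simpa [B, mulVec, dotProduct] using hones f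
  have hBtB := transpose_mul_self_eq_smul_one_sub_ones hcard hQ0 hBBt hB1
  have hsum : n ≠ 0 := (Finset.sum_pos (fun q _ => hn q) ⟨⟨0, by omega⟩, Finset.mem_univ _⟩).ne'
  have hproj : Ninv * Bᵀ * (B * Ninv * Bᵀ)⁻¹ * B * Ninv = Ninv - n⁻¹ • of fun _ _ => 1 :=
    diagonal_inv_mul_transpose_mul_inv_mul_mul_diagonal_inv hQ0 (fun q => (hn q).ne') hsum hBBt
      hBtB
  refine ⟨hproj, fun q k => ?_⟩
  rw [hproj]
  simp [Ninv, diagonal_apply]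

/-- With `F = Q − 1` generating vectors `g_f ∈ {−1,+1}^Q` forming with `1_Q` an
orthogonal basis of `ℝ^Q`, `B = (g₁,…,g_F)'`, `N = diag(n₁,…,n_Q)` positive, `n = Σ n_q`, one has
`N⁻¹ B' (B N⁻¹ B')⁻¹ B N⁻¹ = N⁻¹ − n⁻¹ J_Q`, i.e. entrywise `n_q⁻¹ 1{q=k} − n⁻¹`. -/
theorem stmt1 (Q : ℕ) (hQ : 2 ≤ Q)
    (g : Fin (Q - 1) → Fin Q → ℝ)
    (hpm : ∀ f q, g f q = 1 ∨ g f q = -1)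
    (hones : ∀ f, ∑ q, g f q = 0)
    (horth : ∀ f k, f ≠ k → ∑ q, g f q * g k q = 0)
    (hnorm : ∀ f, ∑ q, g f q * g f q = (Q : ℝ))
    (nv : Fin Q → ℝ) (hn : ∀ q, 0 < nv q) :
    letI B : Matrix (Fin (Q - 1)) (Fin Q) ℝ := Matrix.of g
    letI Ninv : Matrix (Fin Q) (Fin Q) ℝ := Matrix.diagonal fun q => (nv q)⁻¹
    letI n : ℝ := ∑ q, nv q
    Ninv * Bᵀ * (B * Ninv * Bᵀ)⁻¹ * B * Ninv
        = Ninv - n⁻¹ • Matrix.of (fun _ _ => (1 : ℝ)) ∧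
      ∀ q k, (Ninv * Bᵀ * (B * Ninv * Bᵀ)⁻¹ * B * Ninv) q k
        = (if q = k then (nv q)⁻¹ else 0) - n⁻¹ :=
  stmt1_general Q hQ g hones horth hnorm nv hn
end

section
/- If two real matrices A and B in ℝ^{p×m} satisfy A A' = B B', then there exists an orthogonal matrix Γ ∈ ℝ^{m×m} such that A = B Γ. -/
/-!
Write `f, g : 𝕜ᵐ → 𝕜ⁿ` for the maps of `Bᴴ` and `Aᴴ`. The hypothesis `A Aᴴ = B Bᴴ` says exactly
that `‖g x‖ = ‖f x‖` for all `x`, so `f x ↦ g x` is a well-defined linear isometry on the range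
of `f`. Extending it to an isometry `U` of `𝕜ⁿ` gives `Aᴴ = G Bᴴ` for the unitary matrix `G` of
`U`, i.e. `A = B Gᴴ`.
-/

open Matrix

namespace LinearMap

variable {𝕜 E F : Type*} [RCLike 𝕜] [AddCommGroup E] [Module 𝕜 E]
  [NormedAddCommGroup F] [InnerProductSpace 𝕜 F] [FiniteDimensional 𝕜 F]

theorem exists_linearIsometry_comp_eq_of_norm_eq {f g : E →ₗ[𝕜] F}
    (h : ∀ x, ‖g x‖ = ‖f x‖) : ∃ U : F →ₗᵢ[𝕜] F, U.toLinearMap ∘ₗ f = g := by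
  have hker : ker f ≤ ker g := fun x hx => by
    rw [mem_ker, ← norm_eq_zero, h, norm_eq_zero]
    exact hx
  let L : range f →ₗ[𝕜] F := (ker f).liftQ g hker ∘ₗ f.quotKerEquivRange.symm.toLinearMap
  have hL : ∀ x, L ⟨f x, mem_range_self f x⟩ = g x := fun x => by
    simp [L, quotKerEquivRange_symm_apply_image]
  let L' : range f →ₗᵢ[𝕜] F := ⟨L, by rintro ⟨_, x, rfl⟩; simp [hL, h]⟩
  exact ⟨L'.extend, ext fun x => (L'.extend_apply ⟨f x, mem_range_self f x⟩).trans (hL x)⟩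

end LinearMap

namespace Matrix

variable {𝕜 m n : Type*} [RCLike 𝕜] [Fintype m] [Fintype n] [DecidableEq m] [DecidableEq n]

theorem inner_toEuclideanLin_self (M : Matrix m n 𝕜) (x : EuclideanSpace 𝕜 n) :
    inner 𝕜 (toEuclideanLin M x) (toEuclideanLin M x) = inner 𝕜 (toEuclideanLin (Mᴴ * M) x) x := by
  rw [toLpLin_mul_same, LinearMap.comp_apply, toEuclideanLin_conjTranspose_eq_adjoint,
    LinearMap.adjoint_inner_left]

theorem norm_toEuclideanLin_eq_of_conjTranspose_mul_self_eq {M N : Matrix m n 𝕜}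
    (h : Mᴴ * M = Nᴴ * N) (x : EuclideanSpace 𝕜 n) :
    ‖toEuclideanLin M x‖ = ‖toEuclideanLin N x‖ := by
  rw [norm_eq_sqrt_re_inner (𝕜 := 𝕜), norm_eq_sqrt_re_inner (𝕜 := 𝕜),
    inner_toEuclideanLin_self, inner_toEuclideanLin_self, h]

omit [Fintype m] [DecidableEq m] in
theorem mem_unitaryGroup_of_toEuclideanLin_eq {G : Matrix n n 𝕜}
    {U : EuclideanSpace 𝕜 n →ₗᵢ[𝕜] EuclideanSpace 𝕜 n} (hG : toEuclideanLin G = U.toLinearMap) :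
    G ∈ unitaryGroup n 𝕜 := by
  rw [mem_unitaryGroup_iff', star_eq_conjTranspose]
  apply toEuclideanLin.injective
  rw [toLpLin_mul_same, toEuclideanLin_conjTranspose_eq_adjoint, hG, U.adjoint_comp_self',
    toLpLin_one]

theorem exists_mem_unitaryGroup_eq_mul_of_mul_conjTranspose_eq {A B : Matrix m n 𝕜}
    (h : A * Aᴴ = B * Bᴴ) : ∃ Γ ∈ unitaryGroup n 𝕜, A = B * Γ := by
  obtain ⟨U, hU⟩ := LinearMap.exists_linearIsometry_comp_eq_of_norm_eq
    (norm_toEuclideanLin_eq_of_conjTranspose_mul_self_eq (M := Aᴴ) (N := Bᴴ) (by simpa using h))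
  set G := toEuclideanLin.symm U.toLinearMap
  have hG : toEuclideanLin G = U.toLinearMap := toEuclideanLin.apply_symm_apply _
  have hAG : Aᴴ = G * Bᴴ := toEuclideanLin.injective <| by rw [toLpLin_mul_same, hG, hU]
  refine ⟨Gᴴ, ?_, ?_⟩
  · simpa [star_eq_conjTranspose] using Unitary.star_mem (mem_unitaryGroup_of_toEuclideanLin_eq hG)
  · rw [← conjTranspose_conjTranspose A, hAG, conjTranspose_mul, conjTranspose_conjTranspose]

end Matrix

theorem stmt2_general (p m : ℕ)
    (A B : Matrix (Fin p) (Fin m) ℝ) (h : A * Aᵀ = B * Bᵀ) :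
    ∃ Γ : Matrix (Fin m) (Fin m) ℝ, Γᵀ * Γ = 1 ∧ Γ * Γᵀ = 1 ∧ A = B * Γ := by
  simp only [← conjTranspose_eq_transpose_of_trivial] at h ⊢
  obtain ⟨Γ, hΓ, rfl⟩ := exists_mem_unitaryGroup_eq_mul_of_mul_conjTranspose_eq h
  exact ⟨Γ, mem_unitaryGroup_iff'.mp hΓ, mem_unitaryGroup_iff.mp hΓ, rfl⟩

/-- If `A, B ∈ ℝ^{p×m}` satisfy `A A' = B B'`, then there exists an orthogonal matrix
`Γ ∈ ℝ^{m×m}` (`Γ'Γ = ΓΓ' = I`) such that `A = B Γ`. -/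
theorem stmt2 (p m : ℕ) (hp : 0 < p) (hm : 0 < m)
    (A B : Matrix (Fin p) (Fin m) ℝ) (h : A * Aᵀ = B * Bᵀ) :
    ∃ Γ : Matrix (Fin m) (Fin m) ℝ, Γᵀ * Γ = 1 ∧ Γ * Γᵀ = 1 ∧ A = B * Γ :=
  stmt2_general p m A B h
end

section
/- For two symmetric random vectors φ and ψ in ℝ^m with finite second moments, if φ is more peaked than ψ (i.e., P(φ ∈ K) ≥ P(ψ ∈ K) for every symmetric convex set K ⊂ ℝ^m), then Cov(φ) ≤ Cov(ψ) in the Loewner order, i.e., Cov(ψ) − Cov(φ) is positive semi-definite. -/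
open MeasureTheory Matrix BigOperators

/-!
Symmetry kills the means, so both covariance matrices are second-moment matrices, and it suffices
to compare the quadratic forms `v ↦ ∫ (v ⬝ᵥ x)² dμ`. For a linear functional `g`, the sublevel
sets `{(g x)² ≤ t}` are symmetric convex slabs, so peakedness gives
`μ {t < (g x)²} ≤ ν {t < (g x)²}` for every `t`, and the layer-cake formula integrates this to
`∫ (g x)² dμ ≤ ∫ (g x)² dν`.
-/

theorem integral_eq_zero_of_odd {G E : Type*} [MeasurableSpace G] [AddGroup G] [MeasurableNeg G]
    [NormedAddCommGroup E] [NormedSpace ℝ E] (μ : Measure G) [μ.IsNegInvariant] {f : G → E}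
    (hf : f.Odd) : ∫ x, f x ∂μ = 0 := by
  have h := integral_neg_eq_self f μ
  simp only [show ∀ x, f (-x) = -f x from hf, integral_neg] at h
  have : IsAddTorsionFree E := .of_isTorsionFree ℝ E
  exact neg_eq_self.mp h

section Peakedness

variable {E : Type*} [AddCommGroup E] [Module ℝ E] [MeasurableSpace E]
  {μ ν : Measure E} [IsProbabilityMeasure μ] [IsProbabilityMeasure ν]

theorem measure_lt_le_of_peaked
    (hpeak : ∀ K : Set E, Convex ℝ K → K = -K → ν K ≤ μ K) {f : E → ℝ} (hf : Measurable f)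
    (hconv : QuasiconvexOn ℝ Set.univ f) (heven : f.Even) (t : ℝ) :
    μ {x | t < f x} ≤ ν {x | t < f x} := by
  set K := {x | f x ≤ t}
  have hK_convex : Convex ℝ K := by simpa using hconv t
  have hK_symm : K = -K := by ext x; simp [K, heven x]
  have hK_meas : MeasurableSet K := hf measurableSet_Iic
  have hcompl : {x | t < f x} = Kᶜ := by ext x; simp [K]
  rw [hcompl, prob_compl_eq_one_sub hK_meas, prob_compl_eq_one_sub hK_meas]
  exact tsub_le_tsub_left (hpeak K hK_convex hK_symm) 1

theorem integral_le_integral_of_peaked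
    (hpeak : ∀ K : Set E, Convex ℝ K → K = -K → ν K ≤ μ K) {f : E → ℝ} (hf : Measurable f)
    (hconv : QuasiconvexOn ℝ Set.univ f) (heven : f.Even) (hf_nonneg : 0 ≤ f)
    (hν : Integrable f ν) :
    ∫ x, f x ∂μ ≤ ∫ x, f x ∂ν := by
  have hlintegral : ∫⁻ x, ENNReal.ofReal (f x) ∂μ ≤ ∫⁻ x, ENNReal.ofReal (f x) ∂ν := by
    rw [lintegral_eq_lintegral_meas_lt μ (ae_of_all _ hf_nonneg) hf.aemeasurable,
      lintegral_eq_lintegral_meas_lt ν (ae_of_all _ hf_nonneg) hf.aemeasurable]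
    exact lintegral_mono fun t => measure_lt_le_of_peaked hpeak hf hconv heven t
  rw [integral_eq_lintegral_of_nonneg_ae (ae_of_all _ hf_nonneg) hf.aestronglyMeasurable,
    integral_eq_lintegral_of_nonneg_ae (ae_of_all _ hf_nonneg) hf.aestronglyMeasurable]
  exact ENNReal.toReal_mono hν.lintegral_lt_top.ne hlintegral

theorem integral_sq_le_of_peaked
    (hpeak : ∀ K : Set E, Convex ℝ K → K = -K → ν K ≤ μ K) (g : E →ₗ[ℝ] ℝ) (hg : Measurable g)
    (hν : Integrable (fun x => g x ^ 2) ν) :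
    ∫ x, g x ^ 2 ∂μ ≤ ∫ x, g x ^ 2 ∂ν := by
  have hconv : ConvexOn ℝ Set.univ fun x => g x ^ 2 := by
    simpa [Function.comp_def] using (Even.convexOn_pow (𝕜 := ℝ) even_two).comp_linearMap g
  exact integral_le_integral_of_peaked hpeak (hg.pow_const 2) hconv.quasiconvexOn
    (fun x => by simp only [map_neg, neg_sq]) (fun x => sq_nonneg _) hν

end Peakedness

section SecondMoment

variable {ι : Type*}

noncomputable def secondMoment (μ : Measure (ι → ℝ)) : Matrix ι ι ℝ :=
  of fun i j => ∫ x, x i * x j ∂μ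

theorem secondMoment_isHermitian (μ : Measure (ι → ℝ)) : (secondMoment μ).IsHermitian := by
  ext i j
  exact integral_congr_ae (ae_of_all _ fun x => mul_comm _ _)

variable [Fintype ι]

theorem sq_dotProduct_eq_sum (v x : ι → ℝ) :
    (v ⬝ᵥ x) ^ 2 = ∑ i, ∑ j, (v i * v j) * (x i * x j) := by
  rw [sq, dotProduct, Finset.sum_mul_sum]
  exact Finset.sum_congr rfl fun i _ => Finset.sum_congr rfl fun j _ => by ring

theorem integrable_sq_dotProduct {μ : Measure (ι → ℝ)}
    (hμ : ∀ i j, Integrable (fun x => x i * x j) μ) (v : ι → ℝ) : Integrable (fun x => (v ⬝ᵥ x) ^ 2) μ := by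
  simp_rw [sq_dotProduct_eq_sum]
  exact integrable_finsetSum _ fun i _ =>
    integrable_finsetSum _ fun j _ => (hμ i j).const_mul _

theorem dotProduct_secondMoment_mulVec {μ : Measure (ι → ℝ)}
    (hμ : ∀ i j, Integrable (fun x => x i * x j) μ) (v : ι → ℝ) :
    v ⬝ᵥ (secondMoment μ *ᵥ v) = ∫ x, (v ⬝ᵥ x) ^ 2 ∂μ := by
  simp_rw [sq_dotProduct_eq_sum]
  rw [integral_finsetSum _ fun i _ =>
    integrable_finsetSum _ fun j _ => (hμ i j).const_mul _]
  refine Finset.sum_congr rfl fun i _ => ?_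
  rw [integral_finsetSum _ fun j _ => (hμ i j).const_mul _, mulVec, dotProduct, Finset.mul_sum]
  refine Finset.sum_congr rfl fun j _ => ?_
  rw [integral_const_mul, secondMoment, of_apply]
  ring

end SecondMoment

theorem stmt3_general (m : ℕ) (μ ν : Measure (Fin m → ℝ))
    [IsProbabilityMeasure μ] [IsProbabilityMeasure ν]
    (hμsymm : μ.map (fun x => -x) = μ) (hνsymm : ν.map (fun x => -x) = ν)
    (hμint2 : ∀ i j, Integrable (fun x => x i * x j) μ)
    (hνint2 : ∀ i j, Integrable (fun x => x i * x j) ν)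
    (hpeak : ∀ K : Set (Fin m → ℝ), Convex ℝ K → K = -K → ν K ≤ μ K) :
    (Matrix.of fun i j =>
        ((∫ x, x i * x j ∂ν) - (∫ x, x i ∂ν) * (∫ x, x j ∂ν))
          - ((∫ x, x i * x j ∂μ) - (∫ x, x i ∂μ) * (∫ x, x j ∂μ))).PosSemidef := by
  have : μ.IsNegInvariant := ⟨hμsymm⟩
  have : ν.IsNegInvariant := ⟨hνsymm⟩
  have hmean_zero (σ : Measure (Fin m → ℝ)) [σ.IsNegInvariant] (i : Fin m) : ∫ x, x i ∂σ = 0 :=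
    integral_eq_zero_of_odd σ fun x => rfl
  have hcov : (Matrix.of fun i j =>
        ((∫ x, x i * x j ∂ν) - (∫ x, x i ∂ν) * (∫ x, x j ∂ν))
          - ((∫ x, x i * x j ∂μ) - (∫ x, x i ∂μ) * (∫ x, x j ∂μ)))
      = secondMoment ν - secondMoment μ := by
    ext i j
    simp [hmean_zero, secondMoment]
  rw [hcov]
  refine .of_dotProduct_mulVec_nonneg
    ((secondMoment_isHermitian ν).sub (secondMoment_isHermitian μ)) fun v => ?_
  rw [star_trivial, sub_mulVec, dotProduct_sub, dotProduct_secondMoment_mulVec hνint2,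
    dotProduct_secondMoment_mulVec hμint2, sub_nonneg]
  exact integral_sq_le_of_peaked hpeak (dotProductBilin ℝ ℝ v) (by fun_prop)
    (integrable_sq_dotProduct hνint2 v)

/-- For symmetric random vectors (laws) `μ, ν` on `ℝ^m` with finite second moments,
if `μ` is more peaked than `ν` (i.e. `ν K ≤ μ K` for every symmetric convex `K`), then
`Cov(ν) − Cov(μ)` is positive semi-definite. -/
theorem stmt3 (m : ℕ) (μ ν : Measure (Fin m → ℝ))
    [IsProbabilityMeasure μ] [IsProbabilityMeasure ν]
    (hμsymm : μ.map (fun x => -x) = μ) (hνsymm : ν.map (fun x => -x) = ν)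
    (hμint2 : ∀ i j, Integrable (fun x => x i * x j) μ)
    (hνint2 : ∀ i j, Integrable (fun x => x i * x j) ν)
    (hμint1 : ∀ i, Integrable (fun x => x i) μ)
    (hνint1 : ∀ i, Integrable (fun x => x i) ν)
    (hpeak : ∀ K : Set (Fin m → ℝ), Convex ℝ K → K = -K → ν K ≤ μ K) :
    (Matrix.of fun i j =>
        ((∫ x, x i * x j ∂ν) - (∫ x, x i ∂ν) * (∫ x, x j ∂ν))
          - ((∫ x, x i * x j ∂μ) - (∫ x, x i ∂μ) * (∫ x, x j ∂μ))).PosSemidef :=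
  stmt3_general m μ ν hμsymm hνsymm hμint2 hνint2 hpeak
end

section
/- If ψ ∈ ℝ^m is central convex unimodal, then for any p ≥ 1 the random vector (ψ', 0_{p×1}')' ∈ ℝ^{m+p} obtained by appending p zero coordinates is central convex unimodal. -/
open MeasureTheory ProbabilityTheory Matrix BigOperators NNReal ENNReal

/-- Weak convergence of a sequence of measures to a measure: convergence of integrals of all
bounded continuous functions. -/
def WeakLimit {E : Type*} [TopologicalSpace E] [MeasurableSpace E]
    (μs : ℕ → Measure E) (μ : Measure E) : Prop :=
  ∀ f : BoundedContinuousFunction E ℝ,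
    Filter.Tendsto (fun n => ∫ x, f x ∂(μs n)) Filter.atTop (nhds (∫ x, f x ∂μ))

/-- A set of measures is closed convex if it is closed under convex mixtures and under weak
sequential limits (of probability measures). -/
def IsClosedConvexMeasureSet {E : Type*} [TopologicalSpace E] [MeasurableSpace E]
    (B : Set (Measure E)) : Prop :=
  (∀ μ ∈ B, ∀ ν ∈ B, ∀ t : ℝ≥0∞, t ≤ 1 → t • μ + (1 - t) • ν ∈ B) ∧
  (∀ μs : ℕ → Measure E, (∀ n, μs n ∈ B) →
    ∀ μ : Measure E, IsProbabilityMeasure μ → WeakLimit μs μ → μ ∈ B)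

/-- The set of uniform distributions on symmetric convex bodies of `ℝ^m` (compact convex sets
with nonempty interior, symmetric about the origin). -/
def uniformBodies (m : ℕ) : Set (Measure (Fin m → ℝ)) :=
  {μ | ∃ K : Set (Fin m → ℝ), IsCompact K ∧ Convex ℝ K ∧ (interior K).Nonempty ∧
        K = -K ∧ μ = (volume : Measure (Fin m → ℝ))[|K]}

/-- A distribution on `ℝ^m` is central convex unimodal if it belongs to the closed convex hull
of the uniform distributions on symmetric convex bodies, i.e. to every closed convex set of
measures containing them. -/
def IsCCU {m : ℕ} (μ : Measure (Fin m → ℝ)) : Prop :=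
  ∀ B : Set (Measure (Fin m → ℝ)), IsClosedConvexMeasureSet B → uniformBodies m ⊆ B → μ ∈ B

/-- Sherman's peakedness ordering: `μ` is more peaked than `ν` if `μ K ≥ ν K` for every
symmetric convex set `K`. -/
def MorePeaked {m : ℕ} (μ ν : Measure (Fin m → ℝ)) : Prop :=
  ∀ K : Set (Fin m → ℝ), Convex ℝ K → K = -K → ν K ≤ μ K

/-! Pushing forward along the continuous map `x ↦ (x, 0)` pulls closed convex sets of measures
back to closed convex sets, so it suffices to treat the uniform distribution on a symmetric convex
body `K ⊆ ℝ^m`. Its image is the weak limit, as `r → 0`, of the uniform distributions on the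
symmetric convex bodies `K × B_p(r) ⊆ ℝ^(m+p)`, which are central convex unimodal by definition. -/

open Filter Topology Set Metric

section WeakLimit

variable {E F : Type*} [TopologicalSpace E] [MeasurableSpace E]
  [TopologicalSpace F] [MeasurableSpace F]

theorem WeakLimit.map [OpensMeasurableSpace E] [BorelSpace F]
    {μs : ℕ → Measure E} {μ : Measure E} (h : WeakLimit μs μ) {f : E → F} (hf : Continuous f) :
    WeakLimit (fun n => (μs n).map f) (μ.map f) := by
  intro g
  have hcomp : ∀ ν : Measure E, ∫ y, g y ∂(ν.map f) = ∫ x, g (f x) ∂ν := fun ν =>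
    integral_map hf.measurable.aemeasurable g.continuous.aestronglyMeasurable
  simp only [hcomp]
  exact h (g.compContinuous ⟨f, hf⟩)

theorem WeakLimit.prod_left [OpensMeasurableSpace E] [OpensMeasurableSpace F]
    [SecondCountableTopology F] (μ : Measure E) [IsFiniteMeasure μ] {νs : ℕ → Measure F}
    [∀ n, IsProbabilityMeasure (νs n)] {ν : Measure F} [IsFiniteMeasure ν] (h : WeakLimit νs ν) :
    WeakLimit (fun n => μ.prod (νs n)) (μ.prod ν) := by
  intro f
  have hfiber : ∀ x, ∀ ρ : Measure F,
      ∫ y, f (x, y) ∂ρ = ∫ y, f.compContinuous ⟨(x, ·), by fun_prop⟩ y ∂ρ := fun _ _ => rfl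
  simp only [integral_prod _ (f.integrable _)]
  refine tendsto_integral_of_dominated_convergence (fun _ => ‖f‖) (fun n => ?_)
    (integrable_const _) (fun n => ae_of_all _ fun x => ?_) (ae_of_all _ fun x => ?_)
  · exact f.continuous.stronglyMeasurable.integral_prod_right'.aestronglyMeasurable
  · rw [hfiber]
    exact (BoundedContinuousFunction.norm_integral_le_norm _ _).trans
      (BoundedContinuousFunction.norm_compContinuous_le _ _)
  · simp only [hfiber]
    exact h _

end WeakLimit

theorem weakLimit_dirac_of_ae_dist_le {E : Type*} [PseudoMetricSpace E] [MeasurableSpace E]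
    [OpensMeasurableSpace E] {μs : ℕ → Measure E} [∀ n, IsProbabilityMeasure (μs n)] {x : E}
    {r : ℕ → ℝ} (hr : Tendsto r atTop (𝓝 0)) (hμs : ∀ n, ∀ᵐ y ∂μs n, dist y x ≤ r n) :
    WeakLimit μs (Measure.dirac x) := by
  intro f
  rw [integral_dirac' _ _ f.continuous.stronglyMeasurable, Metric.tendsto_atTop]
  intro ε hε
  obtain ⟨δ, hδ, hfδ⟩ := Metric.continuousAt_iff.mp f.continuous.continuousAt (ε / 2) (half_pos hε)
  obtain ⟨N, hN⟩ := eventually_atTop.mp (hr.eventually (gt_mem_nhds hδ))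
  refine ⟨N, fun n hn => ?_⟩
  have hnear : ∀ᵐ y ∂μs n, ‖f y - f x‖ ≤ ε / 2 := by
    filter_upwards [hμs n] with y hy
    exact (hfδ (hy.trans_lt (hN n hn))).le
  calc dist (∫ y, f y ∂μs n) (f x) = ‖∫ y, (f y - f x) ∂μs n‖ := by
        rw [integral_sub (f.integrable _) (integrable_const _), dist_eq_norm]
        simp
    _ ≤ ε / 2 * (μs n).real univ := norm_integral_le_of_norm_le_const hnear
    _ < ε := by simp [hε]

section Conditioning

variable {α β : Type*} [MeasurableSpace α] [MeasurableSpace β]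

theorem MeasureTheory.MeasurePreserving.map_cond_image_emb {μ : Measure α} {ν : Measure β}
    {f : α → β} (hf : MeasurePreserving f μ ν) (he : MeasurableEmbedding f) (s : Set α) :
    (μ[|s]).map f = ν[|f '' s] := by
  rw [ProbabilityTheory.cond, ProbabilityTheory.cond, Measure.map_smul,
    (hf.restrict_image_emb he s).map_eq,
    ← hf.measure_preimage_emb he, preimage_image_eq _ he.injective]

theorem cond_prod_cond (μ : Measure α) (ν : Measure β) [SFinite μ] [SFinite ν]
    {s : Set α} {t : Set β} (hs : μ s ≠ ∞) (ht : ν t ≠ ∞) :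
    (μ[|s]).prod (ν[|t]) = (μ.prod ν)[|s ×ˢ t] := by
  rw [ProbabilityTheory.cond, ProbabilityTheory.cond, ProbabilityTheory.cond,
    Measure.prod_smul_left, Measure.prod_smul_right, Measure.prod_restrict,
    Measure.prod_prod, smul_smul, ENNReal.mul_inv (Or.inr ht) (Or.inl hs), mul_comm]

end Conditioning

section SymmConvexBody

variable {E F : Type*} [TopologicalSpace E] [AddCommGroup E] [Module ℝ E]
  [TopologicalSpace F] [AddCommGroup F] [Module ℝ F]

def IsSymmConvexBody (K : Set E) : Prop :=
  IsCompact K ∧ Convex ℝ K ∧ (interior K).Nonempty ∧ K = -K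

theorem IsSymmConvexBody.prod {K : Set E} {L : Set F} (hK : IsSymmConvexBody K)
    (hL : IsSymmConvexBody L) : IsSymmConvexBody (K ×ˢ L) := by
  obtain ⟨hKc, hKconv, hKint, hKsymm⟩ := hK
  obtain ⟨hLc, hLconv, hLint, hLsymm⟩ := hL
  refine ⟨hKc.prod hLc, hKconv.prod hLconv, ?_, ?_⟩
  · rw [interior_prod_eq]
    exact hKint.prod hLint
  · rw [Set.neg_prod, ← hKsymm, ← hLsymm]

theorem IsSymmConvexBody.image {K : Set E} (hK : IsSymmConvexBody K) (e : E ≃ₜ F)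
    (he : IsLinearMap ℝ e) : IsSymmConvexBody (e '' K) := by
  obtain ⟨hKc, hKconv, hKint, hKsymm⟩ := hK
  refine ⟨hKc.image e.continuous, hKconv.is_linear_image he, ?_, ?_⟩
  · rw [← e.image_interior]
    exact hKint.image e
  · rw [← image_neg_eq_neg, image_image]
    simp_rw [← he.map_neg]
    rw [← image_image e Neg.neg, image_neg_eq_neg, ← hKsymm]

theorem isSymmConvexBody_closedBall {E : Type*} [NormedAddCommGroup E] [NormedSpace ℝ E]
    [ProperSpace E] {r : ℝ} (hr : 0 < r) : IsSymmConvexBody (closedBall (0 : E) r) :=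
  ⟨isCompact_closedBall _ _, convex_closedBall _ _,
    ⟨0, by rw [interior_closedBall _ hr.ne']; exact mem_ball_self hr⟩, by simp⟩

theorem IsSymmConvexBody.isProbabilityMeasure_cond [MeasurableSpace E] {μ : Measure E}
    [μ.IsOpenPosMeasure] [IsFiniteMeasureOnCompacts μ] {K : Set E} (hK : IsSymmConvexBody K) :
    IsProbabilityMeasure (μ[|K]) :=
  cond_isProbabilityMeasure_of_finite (Measure.measure_pos_of_nonempty_interior μ hK.2.2.1).ne'
    hK.1.measure_ne_top

end SymmConvexBody

section FinAppend

theorem isLinearMap_finAppend (R M : Type*) [Semiring R] [AddCommMonoid M] [Module R M]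
    (m n : ℕ) : IsLinearMap R fun q : (Fin m → M) × (Fin n → M) => Fin.append q.1 q.2 where
  map_add q q' := by
    ext i
    induction i using Fin.addCases <;> simp
  map_smul c q := by
    ext i
    induction i using Fin.addCases <;> simp

theorem measurePreserving_finAppend (α : Type*) [MeasureSpace α]
    [SigmaFinite (volume : Measure α)] (m n : ℕ) :
    MeasurePreserving (fun q : (Fin m → α) × (Fin n → α) => Fin.append q.1 q.2) volume volume := by
  convert (volume_measurePreserving_piCongrLeft (fun _ => α) finSumFinEquiv).comp
    (volume_measurePreserving_sumPiEquivProdPi_symm fun _ : Fin m ⊕ Fin n => α) using 1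
  ext ⟨x, y⟩ i
  induction i using Fin.addCases with
  | left i =>
    simpa [MeasurableEquiv.piCongrLeft, MeasurableEquiv.sumPiEquivProdPi] using
      (Equiv.piCongrLeft_sumInl (fun _ => α) finSumFinEquiv x y i).symm
  | right i =>
    simpa [MeasurableEquiv.piCongrLeft, MeasurableEquiv.sumPiEquivProdPi] using
      (Equiv.piCongrLeft_sumInr (fun _ => α) finSumFinEquiv x y i).symm

end FinAppend

theorem IsClosedConvexMeasureSet.preimage_map {E F : Type*} [TopologicalSpace E]
    [MeasurableSpace E] [OpensMeasurableSpace E] [TopologicalSpace F] [MeasurableSpace F]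
    [BorelSpace F] {B : Set (Measure F)} (hB : IsClosedConvexMeasureSet B) {f : E → F}
    (hf : Continuous f) : IsClosedConvexMeasureSet {ν : Measure E | ν.map f ∈ B} := by
  refine ⟨fun μ hμ ν hν t ht => ?_, fun μs hμs μ _ hlim => ?_⟩
  · show (t • μ + (1 - t) • ν).map f ∈ B
    rw [Measure.map_add _ _ hf.measurable, Measure.map_smul, Measure.map_smul]
    exact hB.1 _ hμ _ hν t ht
  · exact hB.2 _ hμs _ (Measure.isProbabilityMeasure_map hf.aemeasurable) (hlim.map hf)

section CentralConvexUnimodal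

variable {m n : ℕ}

theorem IsSymmConvexBody.isCCU_cond {K : Set (Fin m → ℝ)} (hK : IsSymmConvexBody K) :
    IsCCU (volume[|K]) :=
  fun _ _ hU => hU ⟨K, hK.1, hK.2.1, hK.2.2.1, hK.2.2.2, rfl⟩

theorem IsCCU.of_weakLimit {μs : ℕ → Measure (Fin m → ℝ)} (hμs : ∀ k, IsCCU (μs k))
    {μ : Measure (Fin m → ℝ)} [IsProbabilityMeasure μ] (h : WeakLimit μs μ) : IsCCU μ :=
  fun B hB hU => hB.2 μs (fun k => hμs k B hB hU) μ ‹_› h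

theorem IsCCU.map {μ : Measure (Fin m → ℝ)} (hμ : IsCCU μ) {f : (Fin m → ℝ) → (Fin n → ℝ)}
    (hf : Continuous f) (hbodies : ∀ ν ∈ uniformBodies m, IsCCU (ν.map f)) :
    IsCCU (μ.map f) :=
  fun B hB hU => hμ {ν | ν.map f ∈ B} (hB.preimage_map hf) fun ν hν => hbodies ν hν B hB hU

end CentralConvexUnimodal

theorem IsSymmConvexBody.isCCU_cond_map_append_zero {m p : ℕ} {K : Set (Fin m → ℝ)}
    (hK : IsSymmConvexBody K) :
    IsCCU ((volume[|K]).map fun x => Fin.append x (0 : Fin p → ℝ)) := by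
  set append := fun q : (Fin m → ℝ) × (Fin p → ℝ) => Fin.append q.1 q.2
  set r : ℕ → ℝ := fun k => 1 / (k + 1)
  have hball_body : ∀ k, IsSymmConvexBody (closedBall (0 : Fin p → ℝ) (r k)) := fun k =>
    isSymmConvexBody_closedBall (by positivity)
  have := hK.isProbabilityMeasure_cond (μ := volume)
  have := fun k => (hball_body k).isProbabilityMeasure_cond (μ := volume)
  have hthick : ∀ k,
      IsCCU (((volume[|K]).prod (volume[|closedBall (0 : Fin p → ℝ) (r k)])).map append) := by
    intro k
    rw [cond_prod_cond _ _ hK.1.measure_ne_top measure_closedBall_lt_top.ne,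
      ← Measure.volume_eq_prod, (measurePreserving_finAppend ℝ m p).map_cond_image_emb
        (Fin.appendHomeomorph m p).measurableEmbedding]
    exact ((hK.prod (hball_body k)).image (Fin.appendHomeomorph m p)
      (isLinearMap_finAppend ℝ ℝ m p)).isCCU_cond
  have hball :
      WeakLimit (fun k => volume[|closedBall (0 : Fin p → ℝ) (r k)]) (Measure.dirac 0) :=
    weakLimit_dirac_of_ae_dist_le tendsto_one_div_add_atTop_nhds_zero_nat fun _ =>
      ae_cond_mem measurableSet_closedBall
  have hlim : WeakLimit
      (fun k => ((volume[|K]).prod (volume[|closedBall (0 : Fin p → ℝ) (r k)])).map append)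
      ((volume[|K]).map fun x => Fin.append x (0 : Fin p → ℝ)) := by
    have := (hball.prod_left (volume[|K])).map (Fin.continuous_append m p)
    rwa [Measure.prod_dirac, Measure.map_map (by fun_prop) (by fun_prop)] at this
  have := Measure.isProbabilityMeasure_map (μ := volume[|K])
    (f := fun x => Fin.append x (0 : Fin p → ℝ)) (by fun_prop)
  exact IsCCU.of_weakLimit hthick hlim

theorem stmt10_general (m p : ℕ) (μ : Measure (Fin m → ℝ))
    (hμ : IsCCU μ) :
    IsCCU (μ.map (fun x => Fin.append x (0 : Fin p → ℝ))) := by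
  refine hμ.map (by fun_prop) ?_
  rintro _ ⟨K, hKc, hKconv, hKint, hKsymm, rfl⟩
  exact IsSymmConvexBody.isCCU_cond_map_append_zero ⟨hKc, hKconv, hKint, hKsymm⟩

/-- If `ψ` on `ℝ^m` is central convex unimodal, then for any `p ≥ 1` the vector
`(ψ', 0_{p×1}')' ∈ ℝ^{m+p}` obtained by appending `p` zero coordinates is central convex
unimodal. -/
theorem stmt10 (m p : ℕ) (hp : 1 ≤ p) (μ : Measure (Fin m → ℝ)) [IsProbabilityMeasure μ]
    (hμ : IsCCU μ) :
    IsCCU (μ.map (fun x => Fin.append x (0 : Fin p → ℝ))) :=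
  stmt10_general m p μ hμ
end

section
/- Let ε₀, η ~ N(0,1) be independent standard Gaussians, a ≥ 0, c ≥ 0, and 1 ≥ ρ ≥ ρ̃ ≥ 0. Then P(|√(1−ρ²)·ε₀ + ρ·η| ≤ c | η² ≤ a) ≥ P(|√(1−ρ̃²)·ε₀ + ρ̃·η| ≤ c | η² ≤ a). -/
/-!
Given `η = y`, the event `|√(1-ρ²) ε₀ + ρ η| ≤ c` says that `ε₀` lies between
`L = (-c - ρy)/s` and `U = (c - ρy)/s`, where `s = √(1-ρ²)`. So for `ρ < 1` the joint probability
is `F(ρ) = ∫_{-b}^{b} (Φ(U) - Φ(L)) φ(y) dy` with `b = √a`. The Gaussian identity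
`φ((c - ρy)/s) φ(y) = φ(c) φ((y - ρc)/s)` turns the `y`-integrand of `F'(ρ)` into the derivative of
`G(y) = φ(c)/s · (φ((y - ρc)/s) - φ((y + ρc)/s))`. Hence `F'(ρ) = G(b) - G(-b) ≥ 0`, because
`|b - ρc| ≤ b + ρc`. For the endpoint `ρ = 1`, take `ρₙ ↑ 1`: a point lying in infinitely many
of the closed strips lies in the limiting strip, so continuity from above gives the bound there.
-/

open MeasureTheory ProbabilityTheory Real Set Filter Topology

noncomputable section

local notation "γ" => gaussianReal 0 1
local notation "φ" => gaussianPDFReal 0 1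
local notation "Φ" => cdf (gaussianReal 0 1)

namespace MeasureTheory

lemma le_measure_of_frequently_mem {α : Type*} [MeasurableSpace α] {μ : Measure α}
    [IsFiniteMeasure μ] {s : ℕ → Set α} {t : Set α} {m : ENNReal}
    (hs : ∀ n, NullMeasurableSet (s n) μ) (hm : ∀ n, m ≤ μ (s n))
    (ht : ∀ x, (∃ᶠ n in atTop, x ∈ s n) → x ∈ t) : m ≤ μ t := by
  have hanti : Antitone fun N => ⋃ n ≥ N, s n :=
    fun N M hNM => biUnion_mono (fun n hn => le_trans hNM hn) fun _ _ => le_rfl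
  calc m ≤ ⨅ N, μ (⋃ n ≥ N, s n) :=
        le_iInf fun N => (hm N).trans (measure_mono fun x hx => mem_iUnion₂.2 ⟨N, le_rfl, hx⟩)
    _ = μ (⋂ N, ⋃ n ≥ N, s n) :=
        (hanti.measure_iInter (fun N => .biUnion (to_countable _) fun n _ => hs n)
          ⟨0, measure_ne_top _ _⟩).symm
    _ ≤ μ t := measure_mono fun x hx => ht x <| frequently_atTop.2 fun N => by
        simpa using mem_iInter.1 hx N

end MeasureTheory

namespace ProbabilityTheory

@[fun_prop]
lemma continuous_gaussianPDFReal (μ : ℝ) (v : NNReal) : Continuous (gaussianPDFReal μ v) := by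
  unfold gaussianPDFReal; fun_prop

lemma gaussianPDFReal_zero_one (x : ℝ) : φ x = (√(2 * π))⁻¹ * exp (-x ^ 2 / 2) := by
  simp [gaussianPDFReal]

lemma gaussianPDFReal_zero_one_neg (x : ℝ) : φ (-x) = φ x := by
  simp [gaussianPDFReal_zero_one]

lemma gaussianPDFReal_zero_one_le_of_sq_le {x y : ℝ} (h : y ^ 2 ≤ x ^ 2) : φ x ≤ φ y := by
  simp only [gaussianPDFReal_zero_one]; gcongr

lemma hasDerivAt_gaussianPDFReal_zero_one (x : ℝ) : HasDerivAt φ (-x * φ x) x := by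
  simp only [funext gaussianPDFReal_zero_one]
  have h : HasDerivAt (fun x : ℝ => -x ^ 2 / 2) (-x) x :=
    ((hasDerivAt_pow 2 x).neg.div_const 2).congr_deriv (by ring)
  exact (h.exp.const_mul _).congr_deriv (by ring)

lemma gaussianPDFReal_zero_one_mul_eq {s ρ : ℝ} (hs : s ≠ 0) (hsρ : s ^ 2 + ρ ^ 2 = 1)
    (c y : ℝ) : φ ((c - ρ * y) / s) * φ y = φ c * φ ((y - ρ * c) / s) := by
  simp only [gaussianPDFReal_zero_one, mul_mul_mul_comm _ (exp _), ← exp_add]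
  congr 2
  field_simp
  linear_combination (c ^ 2 - y ^ 2) * hsρ

lemma measure_Icc_eq_ofReal_cdf_sub {μ : Measure ℝ} [IsProbabilityMeasure μ]
    [NullSingletonClass μ] (p q : ℝ) : μ (Icc p q) = ENNReal.ofReal (cdf μ q - cdf μ p) := by
  rw [← measure_congr Ioc_ae_eq_Icc, ← StieltjesFunction.measure_Ioc, measure_cdf]

lemma cdf_gaussianReal_zero_one_sub (p q : ℝ) : Φ q - Φ p = ∫ x in p..q, φ x := by
  have hint : Integrable φ := integrable_gaussianPDFReal 0 1
  have hnonneg (x : ℝ) : 0 ≤ ∫ t in Iic x, φ t :=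
    setIntegral_nonneg measurableSet_Iic fun t _ => gaussianPDFReal_nonneg 0 1 t
  simp only [cdf_eq_real, measureReal_def, gaussianReal_apply_eq_integral 0 one_ne_zero,
    ENNReal.toReal_ofReal (hnonneg _)]
  exact intervalIntegral.integral_Iic_sub_Iic hint.integrableOn hint.integrableOn

lemma hasDerivAt_cdf_gaussianReal_zero_one (x : ℝ) : HasDerivAt Φ (φ x) x := by
  have h : Φ = fun t => Φ 0 + ∫ u in (0 : ℝ)..t, φ u := by
    ext t; rw [← cdf_gaussianReal_zero_one_sub]; ring
  rw [h]
  exact (intervalIntegral.integral_hasDerivAt_right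
    ((continuous_gaussianPDFReal 0 1).intervalIntegrable _ _)
    ((continuous_gaussianPDFReal 0 1).stronglyMeasurableAtFilter _ _)
    (continuous_gaussianPDFReal 0 1).continuousAt).const_add _

@[fun_prop]
lemma continuous_cdf_gaussianReal_zero_one : Continuous Φ :=
  continuous_iff_continuousAt.2 fun x => (hasDerivAt_cdf_gaussianReal_zero_one x).continuousAt

def sectionProb (c ρ y : ℝ) : ℝ :=
  Φ ((c - ρ * y) / √(1 - ρ ^ 2)) - Φ ((-c - ρ * y) / √(1 - ρ ^ 2))

def sectionProbDeriv (c ρ y : ℝ) : ℝ :=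
  (φ ((c - ρ * y) / √(1 - ρ ^ 2)) * (ρ * c - y) +
    φ ((-c - ρ * y) / √(1 - ρ ^ 2)) * (ρ * c + y)) / √(1 - ρ ^ 2) ^ 3

def stripProb (b c ρ : ℝ) : ℝ := ∫ y in -b..b, sectionProb c ρ y * φ y

section

variable {b c ρ y : ℝ}

lemma gaussianReal_zero_one_section (hρ : ρ ^ 2 < 1) :
    γ {x | |√(1 - ρ ^ 2) * x + ρ * y| ≤ c} = ENNReal.ofReal (sectionProb c ρ y) := by
  have hs : 0 < √(1 - ρ ^ 2) := sqrt_pos.2 (by linarith)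
  have hset : {x | |√(1 - ρ ^ 2) * x + ρ * y| ≤ c}
      = Icc ((-c - ρ * y) / √(1 - ρ ^ 2)) ((c - ρ * y) / √(1 - ρ ^ 2)) := by
    ext x
    rw [mem_ofPred_eq, abs_le, mem_Icc, div_le_iff₀ hs, le_div_iff₀ hs]
    constructor <;> rintro ⟨h₁, h₂⟩ <;> constructor <;> linarith
  have := nullSingletonClass_gaussianReal (μ := 0) one_ne_zero
  rw [hset, measure_Icc_eq_ofReal_cdf_sub, sectionProb]

lemma sectionProb_nonneg (hc : 0 ≤ c) : 0 ≤ sectionProb c ρ y :=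
  sub_nonneg.2 <| monotone_cdf _ <| div_le_div_of_nonneg_right (by linarith) (sqrt_nonneg _)

@[fun_prop]
lemma continuous_sectionProb (c ρ : ℝ) : Continuous (sectionProb c ρ) := by
  unfold sectionProb; fun_prop

@[fun_prop]
lemma continuous_sectionProbDeriv (c ρ : ℝ) : Continuous (sectionProbDeriv c ρ) := by
  unfold sectionProbDeriv; fun_prop

lemma continuousOn_sectionProbDeriv (c : ℝ) :
    ContinuousOn (fun p : ℝ × ℝ => sectionProbDeriv c p.1 p.2) {p | p.1 ^ 2 < 1} := by
  refine continuousOn_of_forall_continuousAt fun p hp => ?_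
  have hs : √(1 - p.1 ^ 2) ≠ 0 := (sqrt_pos.2 (by simp only [mem_ofPred_eq] at hp; linarith)).ne'
  have hs3 := pow_ne_zero 3 hs
  unfold sectionProbDeriv
  fun_prop (disch := assumption)

lemma hasDerivAt_sub_mul_div_sqrt (c y : ℝ) (hρ : ρ ^ 2 < 1) :
    HasDerivAt (fun ρ => (c - ρ * y) / √(1 - ρ ^ 2)) ((ρ * c - y) / √(1 - ρ ^ 2) ^ 3) ρ := by
  have hs : 0 < √(1 - ρ ^ 2) := sqrt_pos.2 (by linarith)
  have hsq : √(1 - ρ ^ 2) ^ 2 = 1 - ρ ^ 2 := sq_sqrt (by linarith)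
  have hsqrt : HasDerivAt (fun ρ => √(1 - ρ ^ 2)) (-(2 * ρ) / (2 * √(1 - ρ ^ 2))) ρ :=
    ((hasDerivAt_pow 2 ρ).const_sub 1).sqrt (by linarith) |>.congr_deriv (by ring)
  refine (((hasDerivAt_mul_const y).const_sub c).div hsqrt hs.ne').congr_deriv ?_
  field_simp
  linear_combination -y * hsq

lemma hasDerivAt_sectionProb (c y : ℝ) (hρ : ρ ^ 2 < 1) :
    HasDerivAt (fun ρ => sectionProb c ρ y) (sectionProbDeriv c ρ y) ρ := by
  have hU := (hasDerivAt_cdf_gaussianReal_zero_one _).comp ρ (hasDerivAt_sub_mul_div_sqrt c y hρ)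
  have hL := (hasDerivAt_cdf_gaussianReal_zero_one _).comp ρ
    (hasDerivAt_sub_mul_div_sqrt (-c) y hρ)
  refine (hU.sub hL).congr_deriv ?_
  simp only [sectionProbDeriv]
  ring

lemma sectionProbDeriv_mul_eq (c y : ℝ) (hρ : ρ ^ 2 < 1) :
    sectionProbDeriv c ρ y * φ y = φ c / √(1 - ρ ^ 2) ^ 3 *
      ((ρ * c - y) * φ ((y - ρ * c) / √(1 - ρ ^ 2)) +
        (ρ * c + y) * φ ((y + ρ * c) / √(1 - ρ ^ 2))) := by
  have hs : √(1 - ρ ^ 2) ≠ 0 := (sqrt_pos.2 (by linarith)).ne'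
  have hsρ : √(1 - ρ ^ 2) ^ 2 + ρ ^ 2 = 1 := by rw [sq_sqrt (by linarith)]; ring
  have hU := gaussianPDFReal_zero_one_mul_eq hs hsρ c y
  have hL := gaussianPDFReal_zero_one_mul_eq hs hsρ (-c) y
  rw [gaussianPDFReal_zero_one_neg, mul_neg, sub_neg_eq_add] at hL
  simp only [sectionProbDeriv]
  linear_combination (ρ * c - y) / √(1 - ρ ^ 2) ^ 3 * hU + (ρ * c + y) / √(1 - ρ ^ 2) ^ 3 * hL

lemma hasDerivAt_stripProb (hρ : ρ ^ 2 < 1) :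
    HasDerivAt (stripProb b c) (∫ y in -b..b, sectionProbDeriv c ρ y * φ y) ρ := by
  have hopen : IsOpen {ρ : ℝ | ρ ^ 2 < 1} := isOpen_lt (by fun_prop) continuous_const
  obtain ⟨ε, hε, hball⟩ := Metric.nhds_basis_closedBall.mem_iff.1 (hopen.mem_nhds hρ)
  obtain ⟨C, hC⟩ := (isCompact_closedBall ρ ε |>.prod isCompact_uIcc).exists_bound_of_continuousOn
    (f := fun p : ℝ × ℝ => sectionProbDeriv c p.1 p.2 * φ p.2)
    (((continuousOn_sectionProbDeriv c).mono fun p hp => hball hp.1).mul (by fun_prop))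
  refine (intervalIntegral.hasDerivAt_integral_of_dominated_loc_of_deriv_le
    (F := fun ρ y => sectionProb c ρ y * φ y) (F' := fun ρ y => sectionProbDeriv c ρ y * φ y)
    (bound := fun _ => C) (Metric.closedBall_mem_nhds ρ hε)
    (.of_forall fun ρ => by fun_prop) ((by fun_prop : Continuous _).intervalIntegrable _ _)
    (by fun_prop) ?_ intervalIntegrable_const ?_).2
  · exact .of_forall fun y hy ρ' hρ' => hC (ρ', y) ⟨hρ', uIoc_subset_uIcc hy⟩
  · exact .of_forall fun y _ ρ' hρ' => (hasDerivAt_sectionProb c y (hball hρ')).mul_const _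

lemma integral_sectionProbDeriv_mul_nonneg (hb : 0 ≤ b) (hρc : 0 ≤ ρ * c) (hρ : ρ ^ 2 < 1) :
    0 ≤ ∫ y in -b..b, sectionProbDeriv c ρ y * φ y := by
  set s := √(1 - ρ ^ 2) with hs_def
  have hs : 0 < s := sqrt_pos.2 (by linarith)
  set G : ℝ → ℝ := fun y => φ c / s * (φ ((y - ρ * c) / s) - φ ((y + ρ * c) / s))
  have hG (y : ℝ) : HasDerivAt G (sectionProbDeriv c ρ y * φ y) y := by
    have hdiv (d : ℝ) : HasDerivAt (fun y => (y + d) / s) (1 / s) y :=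
      ((hasDerivAt_id y).add_const d).div_const s
    have h₁ := (hasDerivAt_gaussianPDFReal_zero_one _).comp y (hdiv (-(ρ * c)))
    have h₂ := (hasDerivAt_gaussianPDFReal_zero_one _).comp y (hdiv (ρ * c))
    simp only [← sub_eq_add_neg] at h₁
    refine ((h₁.sub h₂).const_mul (φ c / s)).congr_deriv ?_
    rw [sectionProbDeriv_mul_eq c y hρ, ← hs_def]
    field_simp
    ring
  rw [intervalIntegral.integral_eq_sub_of_hasDerivAt (fun y _ => hG y)
    ((by fun_prop : Continuous _).intervalIntegrable _ _)]
  have h₁ : φ ((b + ρ * c) / s) ≤ φ ((b - ρ * c) / s) :=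
    gaussianPDFReal_zero_one_le_of_sq_le <| by
      rw [div_pow, div_pow]; exact div_le_div_of_nonneg_right (by nlinarith) (by positivity)
  have h₂ : φ ((-b - ρ * c) / s) ≤ φ ((-b + ρ * c) / s) :=
    gaussianPDFReal_zero_one_le_of_sq_le <| by
      rw [div_pow, div_pow]; exact div_le_div_of_nonneg_right (by nlinarith) (by positivity)
  have hφc : 0 ≤ φ c / s := div_nonneg (gaussianPDFReal_nonneg 0 1 c) hs.le
  simp only [G]
  nlinarith [mul_nonneg hφc (sub_nonneg.2 h₁), mul_nonneg hφc (sub_nonneg.2 h₂)]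

lemma monotoneOn_stripProb (hb : 0 ≤ b) (hc : 0 ≤ c) :
    MonotoneOn (stripProb b c) (Ico 0 1) := by
  have hsq : ∀ ρ ∈ Ico (0 : ℝ) 1, ρ ^ 2 < 1 := fun ρ hρ => by nlinarith [hρ.1, hρ.2]
  have hderiv : ∀ ρ ∈ Ico (0 : ℝ) 1, HasDerivAt (stripProb b c) _ ρ :=
    fun ρ hρ => hasDerivAt_stripProb (hsq ρ hρ)
  refine monotoneOn_of_deriv_nonneg (convex_Ico 0 1)
    (fun ρ hρ => (hderiv ρ hρ).continuousAt.continuousWithinAt)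
    (fun ρ hρ => (hderiv ρ (interior_subset hρ)).differentiableAt.differentiableWithinAt)
    fun ρ hρ => ?_
  have hρ' := interior_subset hρ
  rw [(hderiv ρ hρ').deriv]
  exact integral_sectionProbDeriv_mul_nonneg hb (mul_nonneg hρ'.1 hc) (hsq ρ hρ')

end

def corrStrip (c ρ : ℝ) : Set (ℝ × ℝ) := {q | |√(1 - ρ ^ 2) * q.1 + ρ * q.2| ≤ c}

section

variable {a c : ℝ}

lemma measurableSet_corrStrip (c ρ : ℝ) : MeasurableSet (corrStrip c ρ) :=
  measurableSet_le (by fun_prop) measurable_const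

lemma gaussianReal_prod_inter_corrStrip {ρ : ℝ} (ha : 0 ≤ a) (hc : 0 ≤ c) (hρ : ρ ^ 2 < 1) :
    ((γ).prod γ) ({q | q.2 ^ 2 ≤ a} ∩ corrStrip c ρ) = ENNReal.ofReal (stripProb (√a) c ρ) := by
  have hsection (y : ℝ) : γ ((fun x => (x, y)) ⁻¹' ({q | q.2 ^ 2 ≤ a} ∩ corrStrip c ρ))
      = (Icc (-√a) √a).indicator (fun y => ENNReal.ofReal (sectionProb c ρ y)) y := by
    by_cases hy : y ∈ Icc (-√a) √a
    · rw [indicator_of_mem hy, ← gaussianReal_zero_one_section hρ]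
      congr 1
      ext x
      simp [corrStrip, Real.sq_le ha, hy.1, hy.2]
    · rw [indicator_of_notMem hy, ← measure_empty (μ := γ)]
      congr 1
      ext x
      simp_all [Real.sq_le ha]
  have hint : IntegrableOn (fun y => sectionProb c ρ y * φ y) (Icc (-√a) √a) :=
    (by fun_prop : Continuous _).integrableOn_Icc
  rw [Measure.prod_apply_symm ((measurableSet_le (by fun_prop) measurable_const).inter
      (measurableSet_corrStrip c ρ)), lintegral_congr hsection,
    lintegral_indicator measurableSet_Icc, gaussianReal_of_var_ne_zero 0 one_ne_zero,
    setLIntegral_withDensity_eq_setLIntegral_mul _ (measurable_gaussianPDF 0 1)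
      (by fun_prop) measurableSet_Icc, stripProb, intervalIntegral.integral_of_le (by simp),
    ← integral_Icc_eq_integral_Ioc, ofReal_integral_eq_lintegral_ofReal hint
      (ae_of_all _ fun y => mul_nonneg (sectionProb_nonneg hc) (gaussianPDFReal_nonneg 0 1 y))]
  refine setLIntegral_congr_fun measurableSet_Icc fun y _ => ?_
  simp [gaussianPDF, ← ENNReal.ofReal_mul (gaussianPDFReal_nonneg 0 1 y), mul_comm]

lemma gaussianReal_prod_inter_corrStrip_le_of_lt_one {ρ ρ' : ℝ} (ha : 0 ≤ a) (hc : 0 ≤ c)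
    (h₀ : 0 ≤ ρ') (hρ' : ρ' ≤ ρ) (h₁ : ρ < 1) :
    ((γ).prod γ) ({q | q.2 ^ 2 ≤ a} ∩ corrStrip c ρ') ≤
      ((γ).prod γ) ({q | q.2 ^ 2 ≤ a} ∩ corrStrip c ρ) := by
  rw [gaussianReal_prod_inter_corrStrip ha hc (by nlinarith),
    gaussianReal_prod_inter_corrStrip ha hc (by nlinarith)]
  exact ENNReal.ofReal_le_ofReal <|
    monotoneOn_stripProb (sqrt_nonneg a) hc ⟨h₀, hρ'.trans_lt h₁⟩ ⟨h₀.trans hρ', h₁⟩ hρ'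

lemma gaussianReal_prod_inter_corrStrip_le_one {ρ' : ℝ} (ha : 0 ≤ a) (hc : 0 ≤ c)
    (h₀ : 0 ≤ ρ') (h₁ : ρ' < 1) :
    ((γ).prod γ) ({q | q.2 ^ 2 ≤ a} ∩ corrStrip c ρ') ≤
      ((γ).prod γ) ({q | q.2 ^ 2 ≤ a} ∩ corrStrip c 1) := by
  set r : ℕ → ℝ := fun n => 1 - (1 - ρ') / (n + 1)
  have hr (n : ℕ) : ρ' ≤ r n ∧ r n < 1 := by
    have hpos : 0 < (1 - ρ') / (n + 1) := div_pos (sub_pos.2 h₁) n.cast_add_one_pos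
    have hle : (1 - ρ') / (n + 1) ≤ 1 - ρ' :=
      div_le_self (by linarith) (by linarith [n.cast_nonneg (α := ℝ)])
    exact ⟨by linarith, by linarith⟩
  have hr_tendsto : Tendsto r atTop (𝓝 1) := by
    simpa [r, div_eq_mul_inv] using (tendsto_const_nhds (x := (1 : ℝ))).sub
      (tendsto_one_div_add_atTop_nhds_zero_nat.const_mul (1 - ρ'))
  refine le_measure_of_frequently_mem (s := fun n => {q | q.2 ^ 2 ≤ a} ∩ corrStrip c (r n))
    (fun n => (measurableSet_le (by fun_prop) measurable_const).inter
      (measurableSet_corrStrip c _) |>.nullMeasurableSet)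
    (fun n => gaussianReal_prod_inter_corrStrip_le_of_lt_one ha hc h₀ (hr n).1 (hr n).2)
    fun q hq => ⟨hq.exists.choose_spec.1, ?_⟩
  have hcont : Continuous fun t : ℝ => |√(1 - t ^ 2) * q.1 + t * q.2| := by fun_prop
  exact isClosed_Iic.mem_of_frequently_of_tendsto (hq.mono fun n hn => hn.2)
    ((hcont.tendsto 1).comp hr_tendsto)

lemma monotoneOn_gaussianReal_prod_inter_corrStrip (ha : 0 ≤ a) (hc : 0 ≤ c) :
    MonotoneOn (fun ρ => ((γ).prod γ) ({q | q.2 ^ 2 ≤ a} ∩ corrStrip c ρ)) (Icc 0 1) := by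
  intro ρ' hρ' ρ hρ hle
  rcases hρ.2.lt_or_eq with hρ1 | rfl
  · exact gaussianReal_prod_inter_corrStrip_le_of_lt_one ha hc hρ'.1 hle hρ1
  rcases hρ'.2.lt_or_eq with hρ'1 | rfl
  · exact gaussianReal_prod_inter_corrStrip_le_one ha hc hρ'.1 hρ'1
  · exact le_rfl

end

end ProbabilityTheory

end

/-- For independent `ε₀, η ~ N(0,1)`, `a ≥ 0`, `c ≥ 0` and `1 ≥ ρ ≥ ρ̃ ≥ 0`,
`P(|√(1−ρ²) ε₀ + ρ η| ≤ c | η² ≤ a) ≥ P(|√(1−ρ̃²) ε₀ + ρ̃ η| ≤ c | η² ≤ a)`. -/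
theorem stmt15 (a c ρ ρ' : ℝ) (ha : 0 ≤ a) (hc : 0 ≤ c)
    (h1 : ρ ≤ 1) (h2 : ρ' ≤ ρ) (h3 : 0 ≤ ρ') :
    letI μ := (gaussianReal 0 1).prod (gaussianReal 0 1)
    (μ[|{q : ℝ × ℝ | q.2 ^ 2 ≤ a}])
        {q : ℝ × ℝ | |Real.sqrt (1 - ρ' ^ 2) * q.1 + ρ' * q.2| ≤ c}
      ≤ (μ[|{q : ℝ × ℝ | q.2 ^ 2 ≤ a}])
          {q : ℝ × ℝ | |Real.sqrt (1 - ρ ^ 2) * q.1 + ρ * q.2| ≤ c} := by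
  have hE : MeasurableSet {q : ℝ × ℝ | q.2 ^ 2 ≤ a} :=
    measurableSet_le (by fun_prop) measurable_const
  rw [cond_apply hE, cond_apply hE]
  exact mul_le_mul_right (monotoneOn_gaussianReal_prod_inter_corrStrip ha hc
    ⟨h3, h2.trans h1⟩ ⟨h3.trans h2, h1⟩ h2) _
end

section
/- Let ε ~ N(0, I_m), let Δ = diag(ρ₁,...,ρ_m) and Δ̃ = diag(ρ̃₁,...,ρ̃_m) be diagonal matrices with entries in [0,1] satisfying ρ_j ≥ ρ̃_j for all j, and let η ~ N(0, I_m) be independent of ε. Then for every r ≥ 0 and a > 0, P((I_m − Δ²)^{1/2} ε + Δη ∈ B_m(r) | η'η ≤ a) ≥ P((I_m − Δ̃²)^{1/2} ε + Δ̃η ∈ B_m(r) | η'η ≤ a), where B_m(r) is the centered Euclidean ball of radius r in ℝ^m. -/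
/-!
Since the coordinates are independent, the correlations can be raised one coordinate at a time
(Fubini), which reduces the claim to the plane: for independent standard normals `ε, η` and
`X_ρ = √(1 - ρ²) ε + ρ η`, the probability `P(η² ≤ b, X_ρ² ≤ c)` is nondecreasing in `ρ ∈ [0, 1]`.

For `ρ < 1`, conditioning on `η = t`, under which `X_ρ ~ N(ρ t, 1 - ρ²)`, writes
`P(|η| ≤ u, |X_ρ| ≤ C)` as an integral over `t ∈ [-u, u]`. Its `ρ`-derivative is, in closed form,
`2 (f_ρ(u, C) - f_ρ(u, -C))`, where `f_ρ` is the joint density of `(η, X_ρ)`, and this is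
nonnegative for `ρ ≥ 0`. At `ρ = 1` we have `X_1 = η`, so the probability is `P(η² ≤ min b c)`,
an upper bound for every `P(η² ≤ b, X_ρ² ≤ c)` because each `X_ρ` is again standard normal.
-/

open MeasureTheory ProbabilityTheory BigOperators

noncomputable def stdGaussian (m : ℕ) : Measure (Fin m → ℝ) :=
  Measure.pi fun _ => gaussianReal 0 1

open Real Set

namespace CorrelatedGaussian

local notation "γ" => gaussianReal 0 1
local notation "γ₂" => Measure.prod (gaussianReal 0 1) (gaussianReal 0 1)
local notation "φ" => gaussianPDFReal 0 1
local notation "Γ" => Measure.pi fun _ => Measure.prod (gaussianReal 0 1) (gaussianReal 0 1)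

lemma gaussianPDFReal_zero_one (t : ℝ) : φ t = (√(2 * π))⁻¹ * exp (-t ^ 2 / 2) := by
  simp [gaussianPDFReal]

@[fun_prop]
lemma continuous_gaussianPDFReal (μ : ℝ) (v : NNReal) :
    Continuous fun x => gaussianPDFReal μ v x := by
  rw [gaussianPDFReal_def]
  fun_prop

lemma gaussianPDFReal_zero_one_neg (t : ℝ) : φ (-t) = φ t := by
  simp [gaussianPDFReal_zero_one]

noncomputable def gaussPrimitive (y : ℝ) : ℝ := ∫ t in (0 : ℝ)..y, φ t

lemma hasDerivAt_gaussPrimitive (y : ℝ) : HasDerivAt gaussPrimitive (φ y) y :=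
  ((continuous_gaussianPDFReal 0 1).integral_hasStrictDerivAt 0 y).hasDerivAt

@[fun_prop]
lemma continuous_gaussPrimitive : Continuous gaussPrimitive :=
  continuous_iff_continuousAt.2 fun y => (hasDerivAt_gaussPrimitive y).continuousAt

lemma gaussPrimitive_sub (l r : ℝ) : gaussPrimitive r - gaussPrimitive l = ∫ t in l..r, φ t :=
  intervalIntegral.integral_interval_sub_left
    ((continuous_gaussianPDFReal 0 1).intervalIntegrable _ _)
    ((continuous_gaussianPDFReal 0 1).intervalIntegrable _ _)

lemma gaussPrimitive_mono : Monotone gaussPrimitive := fun l r h => by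
  rw [← sub_nonneg, gaussPrimitive_sub]
  exact intervalIntegral.integral_nonneg h fun t _ => gaussianPDFReal_nonneg 0 1 t

lemma gaussianReal_zero_one_Icc {l r : ℝ} (h : l ≤ r) :
    γ (Icc l r) = ENNReal.ofReal (gaussPrimitive r - gaussPrimitive l) := by
  rw [gaussianReal_apply_eq_integral 0 one_ne_zero, integral_Icc_eq_integral_Ioc,
    ← intervalIntegral.integral_of_le h, gaussPrimitive_sub]

lemma sqrt_one_sub_sq_pos {x : ℝ} (hx : x ^ 2 < 1) : 0 < √(1 - x ^ 2) :=
  Real.sqrt_pos.2 (by linarith)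

noncomputable def mix (ρ : ℝ) (p : ℝ × ℝ) : ℝ := √(1 - ρ ^ 2) * p.1 + ρ * p.2

@[fun_prop]
lemma measurable_mix (ρ : ℝ) : Measurable (mix ρ) := by
  unfold mix
  fun_prop

def twoSlabs (ρ b c : ℝ) : Set (ℝ × ℝ) := {p | p.2 ^ 2 ≤ b ∧ mix ρ p ^ 2 ≤ c}

lemma measurableSet_twoSlabs (ρ b c : ℝ) : MeasurableSet (twoSlabs ρ b c) := by
  unfold twoSlabs
  rw [ofPred_and]
  exact (measurableSet_le (by fun_prop) (by fun_prop)).inter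
    (measurableSet_le (by fun_prop) (by fun_prop))

noncomputable def sliceProb (C x t : ℝ) : ℝ :=
  gaussPrimitive ((C - x * t) / √(1 - x ^ 2)) - gaussPrimitive ((-C - x * t) / √(1 - x ^ 2))

lemma continuous_sliceProb (C x : ℝ) : Continuous (sliceProb C x) := by
  unfold sliceProb
  fun_prop

lemma mix_sq_le_iff {C x : ℝ} (hC : 0 ≤ C) (hx : x ^ 2 < 1) (e t : ℝ) :
    mix x (e, t) ^ 2 ≤ C ^ 2 ↔
      e ∈ Icc ((-C - x * t) / √(1 - x ^ 2)) ((C - x * t) / √(1 - x ^ 2)) := by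
  have hs := sqrt_one_sub_sq_pos hx
  rw [mix, sq_le_sq, abs_of_nonneg hC, abs_le, mem_Icc, div_le_iff₀ hs, le_div_iff₀ hs]
  constructor <;> rintro ⟨h₁, h₂⟩ <;> constructor <;> linarith

lemma gaussianReal_mix_sq_le {C x : ℝ} (hC : 0 ≤ C) (hx : x ^ 2 < 1) (t : ℝ) :
    γ {e | mix x (e, t) ^ 2 ≤ C ^ 2} = ENNReal.ofReal (sliceProb C x t) := by
  simp_rw [mix_sq_le_iff hC hx, ofPred_mem_eq]
  exact gaussianReal_zero_one_Icc (by gcongr; linarith)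

lemma sliceProb_nonneg {C : ℝ} (hC : 0 ≤ C) (x t : ℝ) : 0 ≤ sliceProb C x t :=
  sub_nonneg.2 (gaussPrimitive_mono (by gcongr; linarith))

lemma measure_twoSlabs_sq_eq_integral {u C x : ℝ} (hu : 0 ≤ u) (hC : 0 ≤ C)
    (hx : x ^ 2 < 1) :
    γ₂ (twoSlabs x (u ^ 2) (C ^ 2)) =
      ENNReal.ofReal (∫ t in -u..u, φ t * sliceProb C x t) := by
  have hslice : ∀ t, γ ((fun e => (e, t)) ⁻¹' twoSlabs x (u ^ 2) (C ^ 2)) =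
      ENNReal.ofReal ((Icc (-u) u).indicator (sliceProb C x) t) := by
    intro t
    have hmem : t ^ 2 ≤ u ^ 2 ↔ t ∈ Icc (-u) u := by
      rw [sq_le_sq, abs_of_nonneg hu, abs_le, mem_Icc]
    by_cases ht : t ∈ Icc (-u) u
    · simp [twoSlabs, indicator_of_mem ht, hmem.2 ht, gaussianReal_mix_sq_le hC hx]
    · simp [twoSlabs, hmem, ht]
  rw [Measure.prod_apply_symm (measurableSet_twoSlabs _ _ _), lintegral_congr hslice,
    ← ofReal_integral_eq_lintegral_ofReal, integral_gaussianReal_eq_integral_smul one_ne_zero]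
  · simp_rw [smul_eq_mul, ← indicator_mul_right]
    rw [integral_indicator measurableSet_Icc, integral_Icc_eq_integral_Ioc,
      intervalIntegral.integral_of_le (by linarith)]
  · exact (continuous_sliceProb C x).integrableOn_Icc.integrable_indicator measurableSet_Icc
  · exact ae_of_all _ (indicator_nonneg fun t _ => sliceProb_nonneg hC x t)

noncomputable def sliceProbDeriv (C x t : ℝ) : ℝ :=
  (φ ((C - x * t) / √(1 - x ^ 2)) * (x * C - t) +
    φ ((C + x * t) / √(1 - x ^ 2)) * (x * C + t)) / √(1 - x ^ 2) ^ 3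

lemma hasDerivAt_div_sqrt_one_sub_sq (K t : ℝ) {x : ℝ} (hx : x ^ 2 < 1) :
    HasDerivAt (fun x => (K - x * t) / √(1 - x ^ 2)) ((x * K - t) / √(1 - x ^ 2) ^ 3) x := by
  have hs := sqrt_one_sub_sq_pos hx
  have hs2 : √(1 - x ^ 2) ^ 2 = 1 - x ^ 2 := sq_sqrt (by linarith)
  have hsqrt : HasDerivAt (fun x => √(1 - x ^ 2)) (-(2 * x) / (2 * √(1 - x ^ 2))) x := by
    simpa using ((hasDerivAt_pow 2 x).const_sub 1).sqrt (by linarith)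
  refine ((((hasDerivAt_id x).mul_const t).const_sub K).div hsqrt hs.ne').congr_deriv ?_
  field_simp
  rw [id, hs2]
  ring

lemma hasDerivAt_sliceProb (C t : ℝ) {x : ℝ} (hx : x ^ 2 < 1) :
    HasDerivAt (fun x => sliceProb C x t) (sliceProbDeriv C x t) x := by
  refine (((hasDerivAt_gaussPrimitive _).comp x (hasDerivAt_div_sqrt_one_sub_sq C t hx)).sub
    ((hasDerivAt_gaussPrimitive _).comp x
      (hasDerivAt_div_sqrt_one_sub_sq (-C) t hx))).congr_deriv ?_
  rw [sliceProbDeriv, show (-C - x * t) / √(1 - x ^ 2) = -((C + x * t) / √(1 - x ^ 2)) by ring,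
    gaussianPDFReal_zero_one_neg]
  ring

lemma continuousAt_sliceProbDeriv (C : ℝ) {z : ℝ × ℝ} (hz : z.1 ^ 2 < 1) :
    ContinuousAt (fun z : ℝ × ℝ => sliceProbDeriv C z.1 z.2) z := by
  have := (sqrt_one_sub_sq_pos hz).ne'
  unfold sliceProbDeriv
  fun_prop (disch := simp [this])

lemma sliceProb_sub_sliceProb (C t : ℝ) {x y : ℝ} (hx : -1 < x) (hxy : x ≤ y) (hy : y < 1) :
    sliceProb C y t - sliceProb C x t = ∫ z in x..y, sliceProbDeriv C z t := by
  have hsq : ∀ z ∈ uIcc x y, z ^ 2 < 1 := fun z hz => by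
    rw [uIcc_of_le hxy] at hz
    nlinarith [hz.1, hz.2]
  refine (intervalIntegral.integral_eq_sub_of_hasDerivAt
    (fun z hz => hasDerivAt_sliceProb C t (hsq z hz)) ?_).symm
  refine ContinuousOn.intervalIntegrable fun z hz => ?_
  exact ((continuousAt_sliceProbDeriv C (z := (z, t)) (hsq z hz)).comp
    (f := fun w : ℝ => (w, t)) (x := z) (by fun_prop)).continuousWithinAt

lemma gaussianPDFReal_mul_gaussianPDFReal (C t : ℝ) {x : ℝ} (hx : x ^ 2 < 1) :
    φ t * φ ((C - x * t) / √(1 - x ^ 2)) =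
      (2 * π)⁻¹ * exp (-C ^ 2 / 2) * exp (-(t - C * x) ^ 2 / (2 * (1 - x ^ 2))) := by
  have hv : 0 < 1 - x ^ 2 := by linarith
  rw [gaussianPDFReal_zero_one, gaussianPDFReal_zero_one, div_pow, sq_sqrt hv.le,
    mul_mul_mul_comm, ← mul_inv, ← sqrt_mul (by positivity), sqrt_mul_self (by positivity),
    mul_assoc, ← exp_add, ← exp_add]
  congr 2
  field_simp
  ring

lemma gaussianPDFReal_mul_gaussianPDFReal' (C t : ℝ) {x : ℝ} (hx : x ^ 2 < 1) :
    φ t * φ ((C + x * t) / √(1 - x ^ 2)) =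
      (2 * π)⁻¹ * exp (-C ^ 2 / 2) * exp (-(t + C * x) ^ 2 / (2 * (1 - x ^ 2))) := by
  have h := gaussianPDFReal_mul_gaussianPDFReal C (-t) hx
  rwa [gaussianPDFReal_zero_one_neg, mul_neg, sub_neg_eq_add, ← neg_add', neg_sq] at h

lemma hasDerivAt_exp_neg_sq_div (c v t : ℝ) :
    HasDerivAt (fun t => exp (-(t - c) ^ 2 / (2 * v)))
      (exp (-(t - c) ^ 2 / (2 * v)) * (-(t - c) / v)) t := by
  refine (((hasDerivAt_id t).sub_const c).pow 2).neg.div_const (2 * v) |>.exp.congr_deriv ?_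
  simp
  ring

lemma integral_mul_sliceProbDeriv_nonneg {C u x : ℝ} (hC : 0 ≤ C) (hu : 0 ≤ u) (hx0 : 0 ≤ x)
    (hx : x ^ 2 < 1) : 0 ≤ ∫ t in -u..u, φ t * sliceProbDeriv C x t := by
  have hv : 0 < 1 - x ^ 2 := by linarith
  have hs3 : √(1 - x ^ 2) ^ 3 = (1 - x ^ 2) * √(1 - x ^ 2) := by rw [pow_succ, sq_sqrt hv.le]
  set K := (2 * π)⁻¹ * exp (-C ^ 2 / 2) / √(1 - x ^ 2)
  set e : ℝ → ℝ → ℝ := fun c t => exp (-(t - c) ^ 2 / (2 * (1 - x ^ 2)))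
  -- `K * e (C * x) t` and `K * e (-(C * x)) t` are the joint densities of `(η, X_x)` at `(t, ±C)`.
  have hH : ∀ t, HasDerivAt (fun t => K * (e (C * x) t - e (-(C * x)) t))
      (φ t * sliceProbDeriv C x t) t := by
    intro t
    refine (((hasDerivAt_exp_neg_sq_div (C * x) _ t).sub
      (hasDerivAt_exp_neg_sq_div (-(C * x)) _ t)).const_mul K).congr_deriv ?_
    have hsplit : φ t * sliceProbDeriv C x t =
        φ t * φ ((C - x * t) / √(1 - x ^ 2)) * ((x * C - t) / √(1 - x ^ 2) ^ 3) +
          φ t * φ ((C + x * t) / √(1 - x ^ 2)) * ((x * C + t) / √(1 - x ^ 2) ^ 3) := by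
      rw [sliceProbDeriv]
      ring
    rw [hsplit, gaussianPDFReal_mul_gaussianPDFReal C t hx,
      gaussianPDFReal_mul_gaussianPDFReal' C t hx, hs3]
    simp only [K, sub_neg_eq_add]
    field_simp
    ring
  have hcont : Continuous fun t => φ t * sliceProbDeriv C x t := by
    unfold sliceProbDeriv
    fun_prop
  rw [intervalIntegral.integral_eq_sub_of_hasDerivAt (fun t _ => hH t)
    (hcont.intervalIntegrable _ _)]
  have hle : e (-(C * x)) u ≤ e (C * x) u :=
    exp_le_exp.2 (div_le_div_of_nonneg_right (by nlinarith [mul_nonneg (mul_nonneg hu hC) hx0])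
      (by positivity))
  have hK : 0 ≤ K := by positivity
  have h₁ : e (C * x) (-u) = e (-(C * x)) u := by simp only [e]; ring_nf
  have h₂ : e (-(C * x)) (-u) = e (C * x) u := by simp only [e]; ring_nf
  rw [h₁, h₂]
  nlinarith

lemma intervalIntegral_integral_swap {f : ℝ → ℝ → ℝ} {a b c d : ℝ} (hab : a ≤ b)
    (hcd : c ≤ d) (hf : ContinuousOn (Function.uncurry f) (Icc a b ×ˢ Icc c d)) :
    ∫ x in a..b, ∫ y in c..d, f x y = ∫ y in c..d, ∫ x in a..b, f x y := by
  simp only [intervalIntegral.integral_of_le hab, intervalIntegral.integral_of_le hcd,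
    ← integral_Icc_eq_integral_Ioc]
  refine integral_integral_swap ?_
  rw [Measure.prod_restrict]
  exact hf.integrableOn_compact (isCompact_Icc.prod isCompact_Icc)

lemma measure_twoSlabs_sq_mono {u C x y : ℝ} (hu : 0 ≤ u) (hC : 0 ≤ C) (hx : 0 ≤ x)
    (hxy : x ≤ y) (hy : y < 1) :
    γ₂ (twoSlabs x (u ^ 2) (C ^ 2)) ≤ γ₂ (twoSlabs y (u ^ 2) (C ^ 2)) := by
  have hsq : ∀ z ∈ Icc x y, z ^ 2 < 1 := fun z hz => by nlinarith [hz.1, hz.2]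
  have hint : ∀ z, IntervalIntegrable (fun t => φ t * sliceProb C z t) volume (-u) u := fun z =>
    ((continuous_gaussianPDFReal 0 1).mul (continuous_sliceProb C z)).intervalIntegrable _ _
  have hcont : ContinuousOn (fun z : ℝ × ℝ => φ z.2 * sliceProbDeriv C z.1 z.2)
      (Icc x y ×ˢ Icc (-u) u) := fun z hz =>
    (((continuous_gaussianPDFReal 0 1).comp continuous_snd).continuousAt.mul
      (continuousAt_sliceProbDeriv C (hsq _ hz.1))).continuousWithinAt
  rw [measure_twoSlabs_sq_eq_integral hu hC (hsq x ⟨le_rfl, hxy⟩),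
    measure_twoSlabs_sq_eq_integral hu hC (hsq y ⟨hxy, le_rfl⟩)]
  refine ENNReal.ofReal_le_ofReal (sub_nonneg.1 ?_)
  calc 0 ≤ ∫ z in x..y, ∫ t in -u..u, φ t * sliceProbDeriv C z t :=
        intervalIntegral.integral_nonneg hxy fun z hz =>
          integral_mul_sliceProbDeriv_nonneg hC hu (hx.trans hz.1) (hsq z hz)
    _ = ∫ t in -u..u, ∫ z in x..y, φ t * sliceProbDeriv C z t :=
        intervalIntegral_integral_swap hxy (by linarith) hcont
    _ = ∫ t in -u..u, (φ t * sliceProb C y t - φ t * sliceProb C x t) := by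
        refine intervalIntegral.integral_congr fun t _ => ?_
        rw [intervalIntegral.integral_const_mul,
          ← sliceProb_sub_sliceProb C t (by linarith) hxy hy, mul_sub]
    _ = _ := intervalIntegral.integral_sub (hint y) (hint x)

lemma map_mix_gaussianReal {x : ℝ} (hx : x ^ 2 ≤ 1) : Measure.map (mix x) γ₂ = γ := by
  have hmix :
      mix x = (fun p : ℝ × ℝ => p.1 + p.2) ∘ Prod.map (√(1 - x ^ 2) * ·) (x * ·) := rfl
  rw [hmix, ← Measure.map_map (by fun_prop) (by fun_prop),
    ← Measure.map_prod_map _ _ (by fun_prop) (by fun_prop), gaussianReal_map_const_mul,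
    gaussianReal_map_const_mul, ← Measure.conv, gaussianReal_conv_gaussianReal]
  congr 1
  · simp
  · ext
    simp [sq_sqrt (sub_nonneg.2 hx)]

lemma measure_twoSlabs_le_measure_twoSlabs_one {x : ℝ} (hx : x ^ 2 ≤ 1) (b c : ℝ) :
    γ₂ (twoSlabs x b c) ≤ γ₂ (twoSlabs 1 b c) := by
  have hc : MeasurableSet {t : ℝ | t ^ 2 ≤ c} := measurableSet_le (by fun_prop) measurable_const
  have hsnd : γ₂ {p | p.2 ^ 2 ≤ c} = γ {t | t ^ 2 ≤ c} := by
    change γ₂ (Prod.snd ⁻¹' {t : ℝ | t ^ 2 ≤ c}) = _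
    rw [← Measure.map_apply measurable_snd hc, Measure.map_snd_prod, measure_univ, one_smul]
  have hmix : γ₂ {p | mix x p ^ 2 ≤ c} = γ {t | t ^ 2 ≤ c} := by
    change γ₂ (mix x ⁻¹' {t : ℝ | t ^ 2 ≤ c}) = _
    rw [← Measure.map_apply (measurable_mix x) hc, map_mix_gaussianReal hx]
  have hone : twoSlabs 1 b c = {p | p.2 ^ 2 ≤ min b c} := by
    ext p
    simp [twoSlabs, mix]
  rcases le_total b c with hbc | hcb
  · calc γ₂ (twoSlabs x b c) ≤ γ₂ {p | p.2 ^ 2 ≤ b} := measure_mono fun p hp => hp.1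
      _ = γ₂ (twoSlabs 1 b c) := by rw [hone, min_eq_left hbc]
  · calc γ₂ (twoSlabs x b c) ≤ γ₂ {p | mix x p ^ 2 ≤ c} := measure_mono fun p hp => hp.2
      _ = γ₂ {p | p.2 ^ 2 ≤ c} := by rw [hmix, hsnd]
      _ = γ₂ (twoSlabs 1 b c) := by rw [hone, min_eq_right hcb]

theorem measure_twoSlabs_mono {x y : ℝ} (hx : 0 ≤ x) (hxy : x ≤ y) (hy : y ≤ 1) (b c : ℝ) :
    γ₂ (twoSlabs x b c) ≤ γ₂ (twoSlabs y b c) := by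
  rcases hy.lt_or_eq with hy | rfl
  · by_cases hbc : 0 ≤ b ∧ 0 ≤ c
    · rw [← sq_sqrt hbc.1, ← sq_sqrt hbc.2]
      exact measure_twoSlabs_sq_mono (sqrt_nonneg b) (sqrt_nonneg c) hx hxy hy
    · have : twoSlabs x b c = ∅ := eq_empty_of_forall_notMem fun p hp =>
        hbc ⟨(sq_nonneg _).trans hp.1, (sq_nonneg _).trans hp.2⟩
      simp [this]
  · exact measure_twoSlabs_le_measure_twoSlabs_one (by nlinarith) b c

def twoBalls {n : ℕ} (ρ : Fin n → ℝ) (a R : ℝ) : Set (Fin n → ℝ × ℝ) :=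
  {q | ∑ i, (q i).2 ^ 2 ≤ a ∧ ∑ i, mix (ρ i) (q i) ^ 2 ≤ R}

lemma measurableSet_twoBalls {n : ℕ} (ρ : Fin n → ℝ) (a R : ℝ) :
    MeasurableSet (twoBalls ρ a R) := by
  unfold twoBalls
  rw [ofPred_and]
  exact (measurableSet_le (by fun_prop) (by fun_prop)).inter
    (measurableSet_le (by fun_prop) (by fun_prop))

section Cons

variable {n : ℕ}

lemma cons_mem_twoBalls_iff_head {ρ : Fin (n + 1) → ℝ} {a R : ℝ} {p : ℝ × ℝ}
    {q : Fin n → ℝ × ℝ} :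
    (Fin.cons p q : Fin (n + 1) → ℝ × ℝ) ∈ twoBalls ρ a R ↔
    p ∈ twoSlabs (ρ 0) (a - ∑ i, (q i).2 ^ 2) (R - ∑ i, mix (ρ i.succ) (q i) ^ 2) := by
  simp only [twoBalls, twoSlabs, mem_ofPred_eq, Fin.sum_univ_succ, Fin.cons_zero, Fin.cons_succ,
    le_sub_iff_add_le]

lemma cons_mem_twoBalls_iff_tail {ρ : Fin (n + 1) → ℝ} {a R : ℝ} {p : ℝ × ℝ}
    {q : Fin n → ℝ × ℝ} :
    (Fin.cons p q : Fin (n + 1) → ℝ × ℝ) ∈ twoBalls ρ a R ↔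
    q ∈ twoBalls (Fin.tail ρ) (a - p.2 ^ 2) (R - mix (ρ 0) p ^ 2) := by
  simp only [twoBalls, mem_ofPred_eq, Fin.sum_univ_succ, Fin.cons_zero, Fin.cons_succ,
    Fin.tail, le_sub_iff_add_le']

lemma measure_twoBalls_eq_prod (ρ : Fin (n + 1) → ℝ) (a R : ℝ) :
    Γ (twoBalls ρ a R) = (Measure.prod γ₂ Γ) {x | Fin.cons x.1 x.2 ∈ twoBalls ρ a R} := by
  have h := measurePreserving_piFinSuccAbove (fun _ : Fin (n + 1) => γ₂) 0
  rw [← h.symm.map_eq, MeasurableEquiv.map_apply]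
  congr 1
  ext x
  simp [Fin.consEquiv]

lemma measurableSet_cons_mem_twoBalls (ρ : Fin (n + 1) → ℝ) (a R : ℝ) :
    MeasurableSet
      {x : (ℝ × ℝ) × (Fin n → ℝ × ℝ) | Fin.cons x.1 x.2 ∈ twoBalls ρ a R} :=
  (measurableSet_twoBalls ρ a R).preimage (by fun_prop)

lemma measure_twoBalls_cons_le_of_le {x y : ℝ} (hx : 0 ≤ x) (hxy : x ≤ y) (hy : y ≤ 1)
    (ρ : Fin n → ℝ) (a R : ℝ) :
    Γ (twoBalls (Fin.cons x ρ) a R) ≤ Γ (twoBalls (Fin.cons y ρ) a R) := by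
  rw [measure_twoBalls_eq_prod, measure_twoBalls_eq_prod,
    Measure.prod_apply_symm (measurableSet_cons_mem_twoBalls _ a R),
    Measure.prod_apply_symm (measurableSet_cons_mem_twoBalls _ a R)]
  refine lintegral_mono fun q => ?_
  simp only [preimage_ofPred_eq, cons_mem_twoBalls_iff_head, Fin.cons_zero, Fin.cons_succ,
    ofPred_mem_eq]
  exact measure_twoSlabs_mono hx hxy hy _ _

lemma measure_twoBalls_cons_le_of_forall_le {ρ ρ' : Fin n → ℝ}
    (h : ∀ a R, Γ (twoBalls ρ a R) ≤ Γ (twoBalls ρ' a R)) (x a R : ℝ) :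
    Γ (twoBalls (Fin.cons x ρ) a R) ≤ Γ (twoBalls (Fin.cons x ρ') a R) := by
  rw [measure_twoBalls_eq_prod, measure_twoBalls_eq_prod,
    Measure.prod_apply (measurableSet_cons_mem_twoBalls _ a R),
    Measure.prod_apply (measurableSet_cons_mem_twoBalls _ a R)]
  refine lintegral_mono fun p => ?_
  simp only [preimage_ofPred_eq, cons_mem_twoBalls_iff_tail, Fin.cons_zero, Fin.tail_cons,
    ofPred_mem_eq]
  exact h _ _

end Cons

theorem measure_twoBalls_mono {n : ℕ} {ρ ρ' : Fin n → ℝ} (h0 : ∀ i, 0 ≤ ρ' i)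
    (hle : ∀ i, ρ' i ≤ ρ i) (h1 : ∀ i, ρ i ≤ 1) (a R : ℝ) :
    Γ (twoBalls ρ' a R) ≤ Γ (twoBalls ρ a R) := by
  induction n generalizing a R with
  | zero => rw [Subsingleton.elim ρ ρ']
  | succ n ih =>
    rw [← Fin.cons_self_tail ρ, ← Fin.cons_self_tail ρ']
    exact (measure_twoBalls_cons_le_of_le (h0 0) (hle 0) (h1 0) _ a R).trans
      (measure_twoBalls_cons_le_of_forall_le
        (ih (fun i => h0 i.succ) (fun i => hle i.succ) (fun i => h1 i.succ)) _ a R)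

end CorrelatedGaussian

theorem stmt16_general (m : ℕ) (ρ ρ' : Fin m → ℝ) (a r : ℝ)
    (h0 : ∀ j, 0 ≤ ρ' j) (hle : ∀ j, ρ' j ≤ ρ j) (h1 : ∀ j, ρ j ≤ 1) :
    letI μ := (stdGaussian m).prod (stdGaussian m)
    letI S := {q : (Fin m → ℝ) × (Fin m → ℝ) | ∑ i, q.2 i ^ 2 ≤ a}
    (μ[|S]) {q | ∑ i, (Real.sqrt (1 - ρ' i ^ 2) * q.1 i + ρ' i * q.2 i) ^ 2 ≤ r ^ 2}
      ≤ (μ[|S]) {q | ∑ i, (Real.sqrt (1 - ρ i ^ 2) * q.1 i + ρ i * q.2 i) ^ 2 ≤ r ^ 2} := by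
  have hS : MeasurableSet {q : (Fin m → ℝ) × (Fin m → ℝ) | ∑ i, q.2 i ^ 2 ≤ a} :=
    measurableSet_le (by fun_prop) measurable_const
  have hμ : (stdGaussian m).prod (stdGaussian m) =
      Measure.map (MeasurableEquiv.arrowProdEquivProdArrow ℝ ℝ (Fin m))
        (Measure.pi fun _ => (gaussianReal 0 1).prod (gaussianReal 0 1)) :=
    (measurePreserving_arrowProdEquivProdArrow ℝ ℝ (Fin m) _ _).map_eq.symm
  rw [cond_apply hS, cond_apply hS]
  gcongr _ * ?_
  rw [hμ, MeasurableEquiv.map_apply, MeasurableEquiv.map_apply]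
  exact CorrelatedGaussian.measure_twoBalls_mono h0 hle h1 a (r ^ 2)

/-- For independent `ε, η ~ N(0, I_m)` and diagonal `Δ = diag(ρ)`,
`Δ̃ = diag(ρ̃)` with `0 ≤ ρ̃_j ≤ ρ_j ≤ 1`, for every `r ≥ 0` and `a > 0`,
`P((I−Δ²)^{1/2} ε + Δη ∈ B_m(r) | η'η ≤ a) ≥ P((I−Δ̃²)^{1/2} ε + Δ̃η ∈ B_m(r) | η'η ≤ a)`. -/
theorem stmt16 (m : ℕ) (ρ ρ' : Fin m → ℝ) (a r : ℝ) (ha : 0 < a) (hr : 0 ≤ r)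
    (h0 : ∀ j, 0 ≤ ρ' j) (hle : ∀ j, ρ' j ≤ ρ j) (h1 : ∀ j, ρ j ≤ 1) :
    letI μ := (stdGaussian m).prod (stdGaussian m)
    letI S := {q : (Fin m → ℝ) × (Fin m → ℝ) | ∑ i, q.2 i ^ 2 ≤ a}
    (μ[|S]) {q | ∑ i, (Real.sqrt (1 - ρ' i ^ 2) * q.1 i + ρ' i * q.2 i) ^ 2 ≤ r ^ 2}
      ≤ (μ[|S]) {q | ∑ i, (Real.sqrt (1 - ρ i ^ 2) * q.1 i + ρ i * q.2 i) ^ 2 ≤ r ^ 2} :=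
  stmt16_general m ρ ρ' a r h0 hle h1
end
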